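/- arXiv:1705.07593 — 9 statements merged into one kernel-verified Lean document; each statement's English description precedes it below -/
import Mathlib

section
/- Let G be a Polish group (a separable, completely metrizable topological group) and let A ⊆ G be a compact biter, i.e., for every compact set K ⊆ G there exist an open set U ⊆ G and elements g, h ∈ G such that U ∩ K ≠ ∅ and g·(U ∩ K)·h ⊆ A. Then A is not Haar null. -/
/-!
Tightness gives a compact set `K` of positive `μ`-measure. The support of `μ` restricted to `K`
is a compact subset of `K`, and every open set meeting it has positive measure. Biting this
compact set, `A` contains a two-sided translate of a relatively open piece of it, which therefore
has positive measure; so no Borel hull of `A` has all its two-sided translates `μ`-null.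
-/

open MeasureTheory

/-- A set `A` in a topological group is *Haar null* if there are a Borel set `B ⊇ A` and a
Borel probability measure `μ` such that `μ (g • B • h) = 0` for all `g, h`. -/
def HaarNull {G : Type*} [Group G] [MeasurableSpace G] (A : Set G) : Prop :=
  ∃ B : Set G, A ⊆ B ∧ MeasurableSet B ∧
    ∃ μ : Measure G, IsProbabilityMeasure μ ∧
      ∀ g h : G, μ ((fun b => g * b * h) '' B) = 0

open Set

namespace MeasureTheory.Measure

variable {X : Type*} [TopologicalSpace X] [MeasurableSpace X]

lemma isCompact_support_restrict [T2Space X] [OpensMeasurableSpace X] (μ : Measure X)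
    {K : Set X} (hK : IsCompact K) : IsCompact (μ.restrict K).support :=
  hK.of_isClosed_subset isClosed_support <| support_restrict_subset.trans <| by
    rw [hK.isClosed.closure_eq]
    exact inter_subset_left

lemma measure_pos_of_isOpen_inter_support_subset [HereditarilyLindelofSpace X]
    {μ : Measure X} {U S : Set X} (hU : IsOpen U) (hne : (U ∩ μ.support).Nonempty)
    (hUS : U ∩ μ.support ⊆ S) : 0 < μ S := by
  obtain ⟨x, hxU, hx⟩ := hne
  have hU_le_S : U ≤ᵐ[μ] S := by
    filter_upwards [support_mem_ae] with y hy hyU using hUS ⟨hyU, hy⟩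
  exact ((mem_support_iff_forall x).1 hx U (hU.mem_nhds hxU)).trans_le (measure_mono_ae hU_le_S)

end MeasureTheory.Measure

def IsCompactBiter {G : Type*} [Group G] [TopologicalSpace G] (A : Set G) : Prop :=
  ∀ K : Set G, IsCompact K → K.Nonempty → ∃ (U : Set G) (g h : G),
    IsOpen U ∧ (U ∩ K).Nonempty ∧ (fun x => g * x * h) '' (U ∩ K) ⊆ A

theorem IsCompactBiter.not_haarNull {G : Type*} [Group G] [TopologicalSpace G] [PolishSpace G]
    [MeasurableSpace G] [BorelSpace G] {A : Set G} (hA : IsCompactBiter A) : ¬ HaarNull A := by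
  rintro ⟨B, hAB, -, μ, hμ, hμB⟩
  obtain ⟨K, -, hK, hμK⟩ := MeasurableSet.univ.exists_lt_isCompact (μ := μ) (r := 0) (by simp)
  set ν := μ.restrict K
  have hν_supp : ν.support.Nonempty :=
    Measure.nonempty_support_iff.2 (Measure.restrict_eq_zero.not.2 hμK.ne')
  obtain ⟨U, g, h, hU, hne, hUA⟩ := hA ν.support (μ.isCompact_support_restrict hK) hν_supp
  have hUB : U ∩ ν.support ⊆ (fun b => g⁻¹ * b * h⁻¹) '' B := fun x hx =>
    ⟨g * x * h, hAB (hUA ⟨x, hx, rfl⟩), by group⟩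
  have hν_pos := Measure.measure_pos_of_isOpen_inter_support_subset hU hne hUB
  exact hν_pos.ne' (Measure.absolutelyContinuous_restrict (hμB g⁻¹ h⁻¹))

theorem stmt_0_general {G : Type*} [Group G] [TopologicalSpace G]
    [PolishSpace G] [MeasurableSpace G] [BorelSpace G] (A : Set G)
    (hA : ∀ K : Set G, IsCompact K → ∃ (U : Set G) (g h : G),
      IsOpen U ∧ (U ∩ K).Nonempty ∧ (fun x => g * x * h) '' (U ∩ K) ⊆ A) :
    ¬ HaarNull A :=
  IsCompactBiter.not_haarNull fun K hK _ => hA K hK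

/-- A compact biter (a set that "bites" a translated piece of every compact set) is not
Haar null. -/
theorem stmt_0 {G : Type*} [Group G] [TopologicalSpace G] [IsTopologicalGroup G]
    [PolishSpace G] [MeasurableSpace G] [BorelSpace G] (A : Set G)
    (hA : ∀ K : Set G, IsCompact K → ∃ (U : Set G) (g h : G),
      IsOpen U ∧ (U ∩ K).Nonempty ∧ (fun x => g * x * h) '' (U ∩ K) ⊆ A) :
    ¬ HaarNull A :=
  stmt_0_general A hA
end

section
/- Let G be a Polish group and let B ⊆ G be a Borel set that is invariant under conjugacy, i.e., gBg⁻¹ = B for every g ∈ G. Then B is left Haar null if and only if B is Haar null, and B is right Haar null if and only if B is Haar null. -/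
open MeasureTheory

/-- A Borel set `B` is *left Haar null* if some Borel probability measure annihilates all left
translates of `B`. -/
def LeftHaarNull {G : Type*} [Group G] [MeasurableSpace G] (B : Set G) : Prop :=
  ∃ μ : Measure G, IsProbabilityMeasure μ ∧ ∀ g : G, μ ((fun b => g * b) '' B) = 0

/-- A Borel set `B` is *right Haar null* if some Borel probability measure annihilates all right
translates of `B`. -/
def RightHaarNull {G : Type*} [Group G] [MeasurableSpace G] (B : Set G) : Prop :=
  ∃ μ : Measure G, IsProbabilityMeasure μ ∧ ∀ g : G, μ ((fun b => b * g) '' B) = 0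

/-! Conjugacy invariance gives `B * g = g * B`, so every two-sided translate `g * B * h` is the
left translate `(g * h) * B`. -/

open Set

section ConjugationInvariant

variable {G : Type*} [Group G] {B : Set G}

theorem image_mul_right_eq_image_mul_left_of_conj_invariant
    (hinv : ∀ g : G, (fun x => g * x * g⁻¹) '' B = B) (g : G) :
    (· * g) '' B = (g * ·) '' B :=
  calc (· * g) '' B = (fun x => g * (g⁻¹ * x * g⁻¹⁻¹)) '' B := by simp [mul_assoc]
    _ = (g * ·) '' ((fun x => g⁻¹ * x * g⁻¹⁻¹) '' B) := (image_image _ _ _).symm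
    _ = (g * ·) '' B := by rw [hinv]

theorem image_mul_mul_eq_image_mul_left_of_conj_invariant
    (hinv : ∀ g : G, (fun x => g * x * g⁻¹) '' B = B) (g h : G) :
    (fun b => g * b * h) '' B = (g * h * ·) '' B :=
  calc (fun b => g * b * h) '' B = (g * ·) '' ((· * h) '' B) := by
        simp only [image_image, mul_assoc]
    _ = (g * ·) '' ((h * ·) '' B) := by
        rw [image_mul_right_eq_image_mul_left_of_conj_invariant hinv]
    _ = (g * h * ·) '' B := by simp only [image_image, mul_assoc]

end ConjugationInvariant

section HaarNull

variable {G : Type*} [Group G] [MeasurableSpace G] {B : Set G}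

theorem HaarNull.leftHaarNull (hB : HaarNull B) : LeftHaarNull B := by
  obtain ⟨B', hBB', -, μ, hμ, hnull⟩ := hB
  refine ⟨μ, hμ, fun g => measure_mono_null ?_ (hnull g 1)⟩
  simpa using image_mono (f := (g * ·)) hBB'

theorem haarNull_of_leftHaarNull_of_conj_invariant (hB : MeasurableSet B)
    (hinv : ∀ g : G, (fun x => g * x * g⁻¹) '' B = B) (hleft : LeftHaarNull B) :
    HaarNull B := by
  obtain ⟨μ, hμ, hnull⟩ := hleft
  refine ⟨B, subset_rfl, hB, μ, hμ, fun g h => ?_⟩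
  rw [image_mul_mul_eq_image_mul_left_of_conj_invariant hinv]
  exact hnull (g * h)

theorem rightHaarNull_iff_leftHaarNull_of_conj_invariant
    (hinv : ∀ g : G, (fun x => g * x * g⁻¹) '' B = B) :
    RightHaarNull B ↔ LeftHaarNull B := by
  simp only [RightHaarNull, LeftHaarNull,
    image_mul_right_eq_image_mul_left_of_conj_invariant hinv]

end HaarNull

theorem stmt_1_general {G : Type*} [Group G] [MeasurableSpace G] (B : Set G)
    (hB : MeasurableSet B)
    (hinv : ∀ g : G, (fun x => g * x * g⁻¹) '' B = B) :
    (LeftHaarNull B ↔ HaarNull B) ∧ (RightHaarNull B ↔ HaarNull B) := by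
  have left_iff : LeftHaarNull B ↔ HaarNull B :=
    ⟨haarNull_of_leftHaarNull_of_conj_invariant hB hinv, HaarNull.leftHaarNull⟩
  exact ⟨left_iff, (rightHaarNull_iff_leftHaarNull_of_conj_invariant hinv).trans left_iff⟩

/-- For a conjugacy-invariant Borel set, left Haar null, right Haar null and Haar null are all
equivalent. -/
theorem stmt_1 {G : Type*} [Group G] [TopologicalSpace G] [IsTopologicalGroup G]
    [PolishSpace G] [MeasurableSpace G] [BorelSpace G] (B : Set G)
    (hB : MeasurableSet B)
    (hinv : ∀ g : G, (fun x => g * x * g⁻¹) '' B = B) :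
    (LeftHaarNull B ↔ HaarNull B) ∧ (RightHaarNull B ↔ HaarNull B) :=
  stmt_1_general B hB hinv
end

section
/- Let G be a subgroup of S∞ with the finite algebraic closure property (FACP). Then the group-theoretic algebraic closure operator is idempotent: for every finite set S ⊆ ℕ, ACL(ACL(S)) = ACL(S). -/
/-- The group-theoretic algebraic closure of `S ⊆ ℕ` with respect to a subgroup `G ≤ S∞`:
the set of points whose orbit under the pointwise stabilizer `G_(S)` is finite. -/
def ACL (G : Subgroup (Equiv.Perm ℕ)) (S : Set ℕ) : Set ℕ :=
  {x | {y | ∃ g ∈ G, (∀ s ∈ S, g s = s) ∧ g x = y}.Finite}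

lemma subset_ACL (G : Subgroup (Equiv.Perm ℕ)) (S : Set ℕ) : S ⊆ ACL G S := by
  intro s hs
  apply Set.Finite.subset (Set.finite_singleton s)
  rintro y ⟨g, _, hfix, rfl⟩
  simp [hfix s hs]

lemma ACL_mono (G : Subgroup (Equiv.Perm ℕ)) {S T : Set ℕ} (hST : S ⊆ T) :
    ACL G S ⊆ ACL G T := by
  intro x hx
  apply Set.Finite.subset hx
  rintro y ⟨g, hg, hfix, rfl⟩
  exact ⟨g, hg, fun s hs => hfix s (hST hs), rfl⟩

lemma apply_mem_ACL (G : Subgroup (Equiv.Perm ℕ)) {S : Set ℕ} {g : Equiv.Perm ℕ}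
    (hg : g ∈ G) (hfix : ∀ s ∈ S, g s = s) {a : ℕ} (ha : a ∈ ACL G S) :
    g a ∈ ACL G S := by
  apply Set.Finite.subset ha
  rintro y ⟨h, hh, hhfix, rfl⟩
  exact ⟨h * g, mul_mem hh hg, fun s hs => by
    simp [Equiv.Perm.mul_apply, hfix s hs, hhfix s hs], rfl⟩

/-- If `G ≤ S∞` has the finite algebraic closure property then `ACL` is idempotent on finite
sets. -/
theorem stmt_3 (G : Subgroup (Equiv.Perm ℕ))
    (hFACP : ∀ S : Set ℕ, S.Finite → (ACL G S).Finite) :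
    ∀ S : Set ℕ, S.Finite → ACL G (ACL G S) = ACL G S := by
  intro S hS
  apply Set.Subset.antisymm
  · -- hard direction
    intro x hx
    set A : Set ℕ := ACL G S with hAdef
    have hA : A.Finite := hFACP S hS
    haveI : Finite A := hA.to_subtype
    -- the set of restrictions to A of elements of the stabilizer of S
    have hQfin : ({q | ∃ g ∈ G, (∀ s ∈ S, g s = s) ∧ ∀ a : A, g a = q a} :
        Set (A → ℕ)).Finite := by
      apply Set.Finite.subset (Set.finite_range (fun f : A → A => fun a => (f a : ℕ)))
      rintro q ⟨g, hg, hfix, hq⟩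
      refine ⟨fun a => ⟨g a, apply_mem_ACL G hg hfix a.2⟩, ?_⟩
      funext a
      exact hq a
    -- orbit of x under the pointwise stabilizer of A is finite
    have hx' : {z | ∃ h ∈ G, (∀ a ∈ A, h a = a) ∧ h x = z}.Finite := hx
    show ({y | ∃ g ∈ G, (∀ s ∈ S, g s = s) ∧ g x = y}).Finite
    have hcover : {y | ∃ g ∈ G, (∀ s ∈ S, g s = s) ∧ g x = y} ⊆
        ⋃ q ∈ {q : A → ℕ | ∃ g ∈ G, (∀ s ∈ S, g s = s) ∧ ∀ a : A, g a = q a},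
          {y | ∃ g ∈ G, (∀ s ∈ S, g s = s) ∧ (∀ a : A, g a = q a) ∧ g x = y} := by
      rintro y ⟨g, hg, hfix, rfl⟩
      exact Set.mem_biUnion ⟨g, hg, hfix, fun a => rfl⟩
        ⟨g, hg, hfix, fun a => rfl, rfl⟩
    refine Set.Finite.subset (Set.Finite.biUnion hQfin fun q hq => ?_) hcover
    obtain ⟨g0, hg0, hg0fix, hg0q⟩ := hq
    have hsub : {y | ∃ g ∈ G, (∀ s ∈ S, g s = s) ∧ (∀ a : A, g a = q a) ∧ g x = y} ⊆
        (fun z => g0 z) '' {z | ∃ h ∈ G, (∀ a ∈ A, h a = a) ∧ h x = z} := by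
      rintro y ⟨g, hg, hgfix, hgq, rfl⟩
      refine ⟨(g0⁻¹ * g) x, ⟨g0⁻¹ * g, mul_mem (inv_mem hg0) hg, ?_, rfl⟩, ?_⟩
      · intro a ha
        have : g a = g0 a := (hgq ⟨a, ha⟩).trans (hg0q ⟨a, ha⟩).symm
        simp [Equiv.Perm.mul_apply, this]
      · simp [Equiv.Perm.mul_apply]
    exact Set.Finite.subset (Set.Finite.image _ hx') hsub
  · intro x hx
    exact ACL_mono G (subset_ACL G S) hx
end

section
/- Let G be a closed subgroup of S∞. Then the sets 𝓕 = {g ∈ G : the set {a ∈ ℕ : the orbit of a under g is finite} is finite} and 𝓒 = {g ∈ G : for every finite set F ⊆ ℕ and every x ∈ ℕ, if the orbit of x under the pointwise stabilizer G_(F) is infinite, then it is not contained in the union of finitely many orbits of g} are both Borel subsets of G and both invariant under conjugacy in G (i.e., g·X·g⁻¹ = X for every g ∈ G, where X is 𝓕 or 𝓒). -/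
open MeasureTheory

/-- The topology of pointwise convergence on `S∞ = Equiv.Perm V` (`V` discrete): the topology
induced by the embedding `σ ↦ (σ, σ⁻¹)` into `(V → V) × (V → V)`. -/
instance instPermTop {V : Type*} [TopologicalSpace V] : TopologicalSpace (Equiv.Perm V) :=
  TopologicalSpace.induced (fun σ : Equiv.Perm V => ((⇑σ, ⇑σ⁻¹) : (V → V) × (V → V)))
    inferInstance

noncomputable instance instPermMeas {V : Type*} [TopologicalSpace V] :
    MeasurableSpace (Equiv.Perm V) := borel _

instance instPermBorel {V : Type*} [TopologicalSpace V] : BorelSpace (Equiv.Perm V) := ⟨rfl⟩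

/-- The orbit `{gᵏ(a) : k ∈ ℤ}` of a point `a` under a permutation `g`. -/
def orbitZ {α : Type*} (g : Equiv.Perm α) (a : α) : Set α :=
  {b | ∃ k : ℤ, (g ^ k) a = b}

/-- The orbit of `x` under the pointwise stabilizer `G_(F)`. -/
def stabOrbit (G : Subgroup (Equiv.Perm ℕ)) (F : Set ℕ) (x : ℕ) : Set ℕ :=
  {y | ∃ g ∈ G, (∀ s ∈ F, g s = s) ∧ g x = y}

/-! Every condition involved is built by countable operations from the sets `{σ | σ a = b}` and
`{σ | σ⁻¹ a = b}`, which are open: orbit membership quantifies over `k : ℤ`, finiteness of a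
subset of `ℕ` over finsets containing it, and the quantifier over finite `F` over finsets.
Conjugation by `h` carries the orbits of `g` onto those of `h g h⁻¹`, and for `h ∈ G` the orbits
of `G_(F)` onto those of `G_(h F)`, which transports both conditions from `g` to `h g h⁻¹`. -/

open Set Equiv

section Measurability

variable {V : Type*} [TopologicalSpace V]

lemma continuous_perm_coe_prod :
    Continuous fun σ : Perm V => ((⇑σ, ⇑σ⁻¹) : (V → V) × (V → V)) :=
  continuous_induced_dom

lemma continuous_perm_apply (a : V) : Continuous fun σ : Perm V => σ a :=
  (continuous_apply a).comp (continuous_fst.comp continuous_perm_coe_prod)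

lemma continuous_perm_inv_apply (a : V) : Continuous fun σ : Perm V => σ⁻¹ a :=
  (continuous_apply a).comp (continuous_snd.comp continuous_perm_coe_prod)

variable [DiscreteTopology V]

lemma measurable_perm_apply_eq (a b : V) : Measurable fun σ : Perm V => σ a = b :=
  measurableSet_setOfPred.1 ((isOpen_discrete {b}).preimage (continuous_perm_apply a)).measurableSet

lemma measurable_perm_inv_apply_eq (a b : V) : Measurable fun σ : Perm V => σ⁻¹ a = b :=
  measurableSet_setOfPred.1
    ((isOpen_discrete {b}).preimage (continuous_perm_inv_apply a)).measurableSet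

variable [Countable V]

lemma measurable_zpow_apply_eq (k : ℤ) (a b : V) :
    Measurable fun σ : Perm V => (σ ^ k) a = b := by
  induction k using Int.induction_on generalizing a with
  | zero => simp [measurable_const]
  | succ k ih =>
    have h : ∀ σ : Perm V, (σ ^ ((k : ℤ) + 1)) a = b ↔ ∃ c, σ a = c ∧ (σ ^ (k : ℤ)) c = b := by
      simp [zpow_add_one]
    simpa only [h] using Measurable.exists fun c => (measurable_perm_apply_eq a c).and (ih c)
  | pred k ih =>
    have h : ∀ σ : Perm V, (σ ^ (-k - 1 : ℤ)) a = b ↔ ∃ c, σ⁻¹ a = c ∧ (σ ^ (-k : ℤ)) c = b := by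
      simp [zpow_sub_one]
    simpa only [h] using Measurable.exists fun c => (measurable_perm_inv_apply_eq a c).and (ih c)

lemma measurable_mem_orbitZ (a b : V) : Measurable fun σ : Perm V => b ∈ orbitZ σ a :=
  Measurable.exists fun k => measurable_zpow_apply_eq k a b

lemma measurable_subset_biUnion_orbitZ (O : Set V) (T : Finset V) :
    Measurable fun σ : Perm V => O ⊆ ⋃ a ∈ T, orbitZ σ a := by
  simp only [subset_def, mem_iUnion, exists_prop]
  exact Measurable.forall fun y => measurable_const.imp <|
    Measurable.exists fun a => measurable_const.and (measurable_mem_orbitZ a y)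

end Measurability

lemma measurable_finite_of_measurable_mem {X V : Type*} [MeasurableSpace X] [Countable V]
    {S : X → Set V} (hS : ∀ b, Measurable fun x => b ∈ S x) :
    Measurable fun x => (S x).Finite := by
  have h : ∀ x, (S x).Finite ↔ ∃ t : Finset V, ∀ b, b ∈ S x → b ∈ t := fun x =>
    ⟨fun hx => ⟨hx.toFinset, fun _ => hx.mem_toFinset.2⟩, fun ⟨t, ht⟩ => t.finite_toSet.subset ht⟩
  simpa only [h] using Measurable.exists fun t => Measurable.forall fun b =>
    (hS b).imp measurable_const

lemma measurable_finite_setOf_orbitZ_finite {V : Type*} [TopologicalSpace V] [DiscreteTopology V]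
    [Countable V] : Measurable fun σ : Perm V => {a | (orbitZ σ a).Finite}.Finite :=
  measurable_finite_of_measurable_mem fun a =>
    measurable_finite_of_measurable_mem fun b => measurable_mem_orbitZ a b

lemma measurable_forall_stabOrbit_not_covered (G : Subgroup (Perm ℕ)) :
    Measurable fun σ : Perm ℕ => ∀ F : Set ℕ, F.Finite → ∀ x : ℕ, (stabOrbit G F x).Infinite →
      ¬ ∃ T : Finset ℕ, stabOrbit G F x ⊆ ⋃ a ∈ T, orbitZ σ a := by
  have h : ∀ P : Set ℕ → Prop, (∀ F : Set ℕ, F.Finite → P F) ↔ ∀ t : Finset ℕ, P t :=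
    fun P => ⟨fun hP t => hP t t.finite_toSet,
      fun hP F hF => hF.coe_toFinset ▸ hP hF.toFinset⟩
  simp only [h]
  exact Measurable.forall fun t => Measurable.forall fun x => measurable_const.imp <|
    (Measurable.exists fun T => measurable_subset_biUnion_orbitZ _ T).not

lemma image_orbitZ {V : Type*} (h g : Perm V) (a : V) :
    h '' orbitZ g a = orbitZ (h * g * h⁻¹) (h a) := by
  ext y
  simp [orbitZ, conj_zpow, Equiv.eq_symm_apply]

lemma finite_setOf_orbitZ_finite_of_conj {V : Type*} (h g : Perm V)
    (hfin : {a | (orbitZ (h * g * h⁻¹) a).Finite}.Finite) :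
    {a | (orbitZ g a).Finite}.Finite := by
  have hpre : {a | (orbitZ g a).Finite} = h ⁻¹' {a | (orbitZ (h * g * h⁻¹) a).Finite} := by
    ext a
    simp [← image_orbitZ, Set.finite_image_iff h.injective.injOn]
  rw [hpre]
  exact hfin.preimage h.injective.injOn

lemma image_stabOrbit {G : Subgroup (Perm ℕ)} {h : Perm ℕ} (hh : h ∈ G) (F : Set ℕ) (x : ℕ) :
    h '' stabOrbit G F x = stabOrbit G (h '' F) (h x) := by
  ext y
  constructor
  · rintro ⟨_, ⟨k, hk, hkF, rfl⟩, rfl⟩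
    refine ⟨h * k * h⁻¹, G.mul_mem (G.mul_mem hh hk) (G.inv_mem hh), ?_, by simp⟩
    rintro _ ⟨s, hs, rfl⟩
    simp [hkF s hs]
  · rintro ⟨k, hk, hkF, rfl⟩
    refine ⟨(h⁻¹ * k * h) x, ⟨h⁻¹ * k * h, G.mul_mem (G.mul_mem (G.inv_mem hh) hk) hh, ?_, rfl⟩,
      by simp⟩
    intro s hs
    simp [hkF (h s) (mem_image_of_mem h hs)]

lemma forall_stabOrbit_not_covered_of_conj {G : Subgroup (Perm ℕ)} {h : Perm ℕ} (hh : h ∈ G)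
    (g : Perm ℕ)
    (hC : ∀ F : Set ℕ, F.Finite → ∀ x : ℕ, (stabOrbit G F x).Infinite →
      ¬ ∃ T : Finset ℕ, stabOrbit G F x ⊆ ⋃ a ∈ T, orbitZ (h * g * h⁻¹) a) :
    ∀ F : Set ℕ, F.Finite → ∀ x : ℕ, (stabOrbit G F x).Infinite →
      ¬ ∃ T : Finset ℕ, stabOrbit G F x ⊆ ⋃ a ∈ T, orbitZ g a := by
  rintro F hF x hinf ⟨T, hT⟩
  refine hC (h '' F) (hF.image h) (h x) ?_ ⟨T.image h, ?_⟩
  · rw [← image_stabOrbit hh]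
    exact hinf.image h.injective.injOn
  · rw [← image_stabOrbit hh, Finset.set_biUnion_finset_image]
    simp only [← image_orbitZ, ← image_iUnion₂]
    exact image_mono hT

lemma image_conj_setOf_eq {H : Type*} [Group H] {P : H → Prop}
    (hP : ∀ g h : H, P (h * g * h⁻¹) → P g) (h : H) :
    (fun x => h * x * h⁻¹) '' {g | P g} = {g | P g} := by
  ext g
  constructor
  · rintro ⟨g, hg, rfl⟩
    exact hP _ h⁻¹ (by rwa [show h⁻¹ * (h * g * h⁻¹) * h⁻¹⁻¹ = g by group])
  · intro hg
    exact ⟨h⁻¹ * g * h, hP _ h (by rwa [show h * (h⁻¹ * g * h) * h⁻¹ = g by group]), by group⟩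

theorem stmt_7_general (G : Subgroup (Equiv.Perm ℕ)) :
    MeasurableSet {g : G | {a : ℕ | (orbitZ (g : Equiv.Perm ℕ) a).Finite}.Finite} ∧
    MeasurableSet {g : G | ∀ F : Set ℕ, F.Finite → ∀ x : ℕ, (stabOrbit G F x).Infinite →
      ¬ ∃ T : Finset ℕ, stabOrbit G F x ⊆ ⋃ a ∈ T, orbitZ (g : Equiv.Perm ℕ) a} ∧
    (∀ h : G, (fun x => h * x * h⁻¹) ''
        {g : G | {a : ℕ | (orbitZ (g : Equiv.Perm ℕ) a).Finite}.Finite} =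
      {g : G | {a : ℕ | (orbitZ (g : Equiv.Perm ℕ) a).Finite}.Finite}) ∧
    (∀ h : G, (fun x => h * x * h⁻¹) ''
        {g : G | ∀ F : Set ℕ, F.Finite → ∀ x : ℕ, (stabOrbit G F x).Infinite →
          ¬ ∃ T : Finset ℕ, stabOrbit G F x ⊆ ⋃ a ∈ T, orbitZ (g : Equiv.Perm ℕ) a} =
      {g : G | ∀ F : Set ℕ, F.Finite → ∀ x : ℕ, (stabOrbit G F x).Infinite →
        ¬ ∃ T : Finset ℕ, stabOrbit G F x ⊆ ⋃ a ∈ T, orbitZ (g : Equiv.Perm ℕ) a}) := by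
  refine ⟨measurable_subtype_coe (measurableSet_setOfPred.2 measurable_finite_setOf_orbitZ_finite),
    measurable_subtype_coe
      (measurableSet_setOfPred.2 (measurable_forall_stabOrbit_not_covered G)),
    image_conj_setOf_eq fun g h => ?_, image_conj_setOf_eq fun g h => ?_⟩
  · exact finite_setOf_orbitZ_finite_of_conj (h : Perm ℕ) g
  · exact forall_stabOrbit_not_covered_of_conj h.2 (g : Perm ℕ)

/-- For a closed subgroup `G ≤ S∞`, the sets `𝓕` (finitely many finite orbits) and `𝓒` (no
infinite orbit of a pointwise stabilizer is covered by finitely many orbits) are Borel and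
conjugacy invariant. -/
theorem stmt_7 (G : Subgroup (Equiv.Perm ℕ)) (hG : IsClosed (G : Set (Equiv.Perm ℕ))) :
    MeasurableSet {g : G | {a : ℕ | (orbitZ (g : Equiv.Perm ℕ) a).Finite}.Finite} ∧
    MeasurableSet {g : G | ∀ F : Set ℕ, F.Finite → ∀ x : ℕ, (stabOrbit G F x).Infinite →
      ¬ ∃ T : Finset ℕ, stabOrbit G F x ⊆ ⋃ a ∈ T, orbitZ (g : Equiv.Perm ℕ) a} ∧
    (∀ h : G, (fun x => h * x * h⁻¹) ''
        {g : G | {a : ℕ | (orbitZ (g : Equiv.Perm ℕ) a).Finite}.Finite} =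
      {g : G | {a : ℕ | (orbitZ (g : Equiv.Perm ℕ) a).Finite}.Finite}) ∧
    (∀ h : G, (fun x => h * x * h⁻¹) ''
        {g : G | ∀ F : Set ℕ, F.Finite → ∀ x : ℕ, (stabOrbit G F x).Infinite →
          ¬ ∃ T : Finset ℕ, stabOrbit G F x ⊆ ⋃ a ∈ T, orbitZ (g : Equiv.Perm ℕ) a} =
      {g : G | ∀ F : Set ℕ, F.Finite → ∀ x : ℕ, (stabOrbit G F x).Infinite →
        ¬ ∃ T : Finset ℕ, stabOrbit G F x ⊆ ⋃ a ∈ T, orbitZ (g : Equiv.Perm ℕ) a}) :=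
  stmt_7_general G
end

section
/- Let G be a closed subgroup of S∞. If the set 𝓕 = {g ∈ G : the set {a ∈ ℕ : the orbit of a under g is finite} is finite} is co-Haar null in G, then G has the finite algebraic closure property (FACP). -/
open MeasureTheory

/-! If `ACL G S` is infinite, every element of the pointwise stabilizer `G_(S)` fixes `S` and
hence has a finite orbit through each of the infinitely many points of `ACL G S`; so `G_(S)`
lies in the Haar null set of the hypothesis. But `G_(S)` has countably many left cosets (they
are indexed by the restrictions `g|_S : S → ℕ`), and a subgroup of countable index is never
Haar null: the left translates of the witnessing Borel set by the coset representatives would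
cover the group with countably many null sets of the probability measure. -/

theorem HaarNull.mono {G : Type*} [Group G] [MeasurableSpace G] {A A' : Set G} (hA : A ⊆ A')
    (hA' : HaarNull A') : HaarNull A := by
  obtain ⟨B, hA'B, hB, μ, hμ, hnull⟩ := hA'
  exact ⟨B, hA.trans hA'B, hB, μ, hμ, hnull⟩

theorem Subgroup.not_haarNull_of_countable_quotient {G : Type*} [Group G] [MeasurableSpace G]
    (H : Subgroup G) [Countable (G ⧸ H)] : ¬ HaarNull (H : Set G) := by
  rintro ⟨B, hHB, -, μ, hμ, hnull⟩
  have hcover : (Set.univ : Set G) ⊆ ⋃ q : G ⧸ H, (fun b => q.out * b * 1) '' B := by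
    intro g _
    obtain ⟨h, hh⟩ := QuotientGroup.mk_out_eq_mul H g
    refine Set.mem_iUnion.2 ⟨(g : G ⧸ H), h⁻¹, hHB (inv_mem h.2), ?_⟩
    simp only [hh, mul_one, mul_inv_cancel_right]
  have hzero : μ Set.univ = 0 :=
    measure_mono_null hcover (measure_iUnion_null fun q => hnull q.out 1)
  simp at hzero

theorem countable_quotient_fixingSubgroup {M α : Type*} [Group M] [MulAction M α] [Countable α]
    {s : Set α} (hs : s.Finite) : Countable (M ⧸ fixingSubgroup M s) := by
  have : Finite s := hs.to_subtype
  let restrict : M ⧸ fixingSubgroup M s → (s → α) :=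
    Quotient.lift (fun g x => g • (x : α)) fun g g' hgg' => by
      have hfix := (mem_fixingSubgroup_iff M).1 (QuotientGroup.leftRel_apply.1 hgg')
      funext x
      exact (inv_smul_eq_iff.1 (by rw [smul_smul]; exact hfix x x.2)).symm
  refine Function.Injective.countable (f := restrict) ?_
  rintro ⟨g⟩ ⟨g'⟩ hgg'
  refine Quotient.sound <|
    QuotientGroup.leftRel_apply.2 ((mem_fixingSubgroup_iff M).2 fun x hx => ?_)
  rw [mul_smul, inv_smul_eq_iff]
  exact (congrFun hgg' ⟨x, hx⟩).symm

theorem orbitZ_subset_stabOrbit {G : Subgroup (Equiv.Perm ℕ)} {S : Set ℕ} {g : G}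
    (hg : g ∈ fixingSubgroup G S) (x : ℕ) :
    orbitZ (g : Equiv.Perm ℕ) x ⊆ stabOrbit G S x := by
  rintro y ⟨k, rfl⟩
  exact ⟨(g : Equiv.Perm ℕ) ^ k, zpow_mem g.2 k,
    fun s hs => Function.IsFixedPt.perm_zpow ((mem_fixingSubgroup_iff G).1 hg s hs) k, rfl⟩

theorem ACL_subset_setOf_finite_orbitZ {G : Subgroup (Equiv.Perm ℕ)} {S : Set ℕ} {g : G}
    (hg : g ∈ fixingSubgroup G S) : ACL G S ⊆ {a | (orbitZ (g : Equiv.Perm ℕ) a).Finite} :=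
  fun x hx => Set.Finite.subset hx (orbitZ_subset_stabOrbit hg x)

theorem stmt_9_general (G : Subgroup (Equiv.Perm ℕ))
    (hF : HaarNull ({g : G | {a : ℕ | (orbitZ (g : Equiv.Perm ℕ) a).Finite}.Finite}ᶜ)) :
    ∀ S : Set ℕ, S.Finite → (ACL G S).Finite := by
  intro S hS
  by_contra hinf
  have hstab : (fixingSubgroup G S : Set G) ⊆
      {g : G | {a : ℕ | (orbitZ (g : Equiv.Perm ℕ) a).Finite}.Finite}ᶜ :=
    fun g hg hfin => hinf (hfin.subset (ACL_subset_setOf_finite_orbitZ hg))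
  have : Countable (G ⧸ fixingSubgroup G S) := countable_quotient_fixingSubgroup hS
  exact (fixingSubgroup G S).not_haarNull_of_countable_quotient (hF.mono hstab)

/-- If in a closed subgroup `G ≤ S∞` the set of elements with only finitely many finite orbits
is co-Haar null, then `G` has the FACP. -/
theorem stmt_9 (G : Subgroup (Equiv.Perm ℕ)) (hG : IsClosed (G : Set (Equiv.Perm ℕ)))
    (hF : HaarNull ({g : G | {a : ℕ | (orbitZ (g : Equiv.Perm ℕ) a).Finite}.Finite}ᶜ)) :
    ∀ S : Set ℕ, S.Finite → (ACL G S).Finite :=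
  stmt_9_general G hF
end

section
/- Let L be a countable first-order language and let M be a countably infinite, locally finite, ultrahomogeneous L-structure (i.e., M is the Fraïssé limit of its age). Then the following are equivalent: (i) the automorphism group Aut(M) has the finite algebraic closure property, i.e., for every finite set S ⊆ M the set {b ∈ M : the orbit of b under the pointwise stabilizer Aut(M)_(S) is finite} is finite; (ii) the age of M has the cofinal strong amalgamation property (CSAP), i.e., for every finitely generated substructure B₀ of M there exist a finitely generated substructure B of M and an embedding B₀ → B such that the strong amalgamation property holds over B: for every pair of finitely generated substructures C, D of M and all embeddings ψ : B → C and χ : B → D there exist a finitely generated substructure E of M and embeddings ψ' : C → E and χ' : D → E such that ψ' ∘ ψ = χ' ∘ χ and range(ψ') ∩ range(χ') = range(ψ' ∘ ψ). -/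
/-!
Let `acl S` be the set of points with finite orbit under `Aut(M)_(S)`.

If all `acl S` with `S` finite are finite, then `B = acl B₀` is a strong amalgamation base.
As `acl (acl B₀) = acl B₀`, points outside `B` have infinite `Aut(M)_(B)`-orbits. After
extending `B → C` and `B → D` to automorphisms and pulling `C` and `D` back over `B`, Neumann's
lemma gives `k ∈ Aut(M)_(B)` moving the finitely many points of `D \ B` off `C`, and
`C ∪ k D` is a strong amalgam.

Conversely, let `B` be a strong amalgamation base and `b` a point with finite
`Aut(M)_(B)`-orbit `O`. Amalgamate `⟨B ∪ O⟩` with itself over `B` and extend both embeddings to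
automorphisms `u`, `v`. Since `v⁻¹ u` fixes `B`, it maps `b` into `O`, so the image of `b` lies
in both copies, and strongness forces `b ∈ B`. Thus `acl B ⊆ B`; an automorphism carrying `⟨S⟩`
into such a `B` transports this to `acl S`.
-/

open scoped Pointwise

namespace MulAction

variable {G Ω : Type*} [Group G] [MulAction G Ω]

theorem index_stabilizer_ne_zero_iff (x : Ω) :
    (stabilizer G x).index ≠ 0 ↔ (orbit G x).Finite := by
  rw [index_stabilizer]
  exact ⟨Set.finite_of_ncard_ne_zero, fun h => Set.ncard_ne_zero_of_mem (mem_orbit_self x) h⟩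

theorem finiteIndex_fixingSubgroup {T : Set Ω} (hT : T.Finite)
    (horbit : ∀ t ∈ T, (orbit G t).Finite) : (fixingSubgroup G T).FiniteIndex := by
  have : Finite T := hT.to_subtype
  have hfix : fixingSubgroup G T = ⨅ t : T, stabilizer G (t : Ω) := by
    ext g
    simp [mem_fixingSubgroup_iff]
  rw [hfix]
  exact Subgroup.finiteIndex_iInf fun t =>
    ⟨(index_stabilizer_ne_zero_iff _).2 (horbit t t.2)⟩

theorem orbit_finite_of_finiteIndex {H : Subgroup G} [H.FiniteIndex] {x : Ω}
    (hx : (orbit H x).Finite) : (orbit G x).Finite := by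
  rw [← index_stabilizer_ne_zero_iff] at hx ⊢
  rw [← Subgroup.relIndex_top_right]
  exact Subgroup.relIndex_ne_zero_trans hx (by simpa using Subgroup.FiniteIndex.index_ne_zero)

/-- B. H. Neumann's lemma: otherwise `G` would be covered by the finitely many cosets
`{g | g • a = b}` (`a ∈ A`, `b ∈ B`) of the infinite-index stabilizers of points of `A`. -/
theorem exists_disjoint_smul_of_infinite_orbits {A B : Set Ω} (hA : A.Finite) (hB : B.Finite)
    (hinf : ∀ a ∈ A, (orbit G a).Infinite) : ∃ g : G, Disjoint (g • A) B := by
  by_contra! hcover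
  choose! g hg using fun (p : Ω × Ω) (h : ∃ u : G, u • p.1 = p.2) => h
  have hcosets : ⋃ p ∈ hA.toFinset ×ˢ hB.toFinset, g p • (stabilizer G p.1 : Set G) =
      Set.univ := by
    refine Set.eq_univ_of_forall fun x => ?_
    obtain ⟨_, ⟨a, ha, rfl⟩, hxa⟩ := Set.not_disjoint_iff.1 (hcover x)
    have hgx : g (a, x • a) • a = x • a := hg (a, x • a) ⟨x, rfl⟩
    refine Set.mem_biUnion (x := (a, x • a)) (by simp [ha, hxa]) ?_
    rw [mem_leftCoset_iff, SetLike.mem_coe, mem_stabilizer_iff, mul_smul, inv_smul_eq_iff]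
    exact hgx.symm
  obtain ⟨p, hp, hfin⟩ := Subgroup.exists_finiteIndex_of_leftCoset_cover hcosets
  simp only [Finset.mem_product, Set.Finite.mem_toFinset] at hp
  exact hinf p.1 hp.1 ((index_stabilizer_ne_zero_iff _).1 hfin.index_ne_zero)

theorem orbit_subset_of_le {H K : Subgroup G} (hHK : H ≤ K) (x : Ω) :
    orbit H x ⊆ orbit K x := by
  rintro _ ⟨⟨g, hg⟩, rfl⟩
  exact ⟨⟨g, hHK hg⟩, rfl⟩

variable (G) in
def acl (S : Set Ω) : Set Ω :=
  {b | (orbit (fixingSubgroup G S) b).Finite}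

variable {S T : Set Ω}

theorem subset_acl : S ⊆ acl G S := fun s hs =>
  (Set.finite_singleton s).subset <| by
    rintro _ ⟨⟨g, hg⟩, rfl⟩
    exact (mem_fixingSubgroup_iff G).1 hg s hs

theorem acl_mono (hST : S ⊆ T) : acl G S ⊆ acl G T := fun _ hb =>
  hb.subset (orbit_subset_of_le (fixingSubgroup_antitone G Ω hST) _)

theorem smul_mem_acl_smul (g : G) {b : Ω} (hb : b ∈ acl G S) : g • b ∈ acl G (g • S) := by
  refine (hb.image (g • ·)).subset ?_
  rintro _ ⟨⟨k, hk⟩, rfl⟩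
  have hconj := Set.conj_mem_fixingSubgroup (inv_smul_smul g S) hk
  refine ⟨_, ⟨⟨MulAut.conj g⁻¹ k, hconj⟩, rfl⟩, ?_⟩
  simp [mul_smul]

/-- `fixingSubgroup G (acl G S)` has finite index in `fixingSubgroup G S`, so it has the same
finite orbits. -/
theorem acl_acl_subset (hS : (acl G S).Finite) : acl G (acl G S) ⊆ acl G S := by
  intro d hd
  have := finiteIndex_fixingSubgroup (G := fixingSubgroup G S) hS fun _ ht => ht
  refine orbit_finite_of_finiteIndex (H := fixingSubgroup (fixingSubgroup G S) (acl G S)) ?_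
  refine hd.subset ?_
  rintro _ ⟨⟨⟨g, hgS⟩, hg⟩, rfl⟩
  exact ⟨⟨g, fun t => hg t⟩, rfl⟩

end MulAction

namespace FirstOrder.Language.Equiv

variable {L : Language} {M : Type*} [L.Structure M]

instance : Group (M ≃[L] M) where
  mul := comp
  one := refl L M
  inv := symm
  mul_assoc _ _ _ := rfl
  one_mul _ := rfl
  mul_one _ := rfl
  inv_mul_cancel := symm_comp_self

instance : MulAction (M ≃[L] M) M where
  smul g x := g x
  one_smul := refl_apply
  mul_smul _ _ _ := rfl

@[simp] theorem smul_def (g : M ≃[L] M) (x : M) : g • x = g x := rfl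
@[simp] theorem mul_apply (g h : M ≃[L] M) (x : M) : (g * h) x = g (h x) := rfl
@[simp] theorem inv_apply (g : M ≃[L] M) (x : M) : g⁻¹ x = g.symm x := rfl

end FirstOrder.Language.Equiv

open MulAction

namespace FirstOrder.Language

variable {L : Language} {M : Type*} [L.Structure M]

theorem setOf_exists_equiv_fix_eq_orbit (S : Set M) (b : M) :
    {c : M | ∃ g : M ≃[L] M, (∀ s ∈ S, g s = s) ∧ g b = c} =
      orbit (fixingSubgroup (M ≃[L] M) S) b := by
  ext c
  constructor
  · rintro ⟨g, hg, rfl⟩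
    exact ⟨⟨g, (mem_fixingSubgroup_iff _).2 hg⟩, rfl⟩
  · rintro ⟨⟨g, hg⟩, rfl⟩
    exact ⟨g, (mem_fixingSubgroup_iff _).1 hg, rfl⟩

theorem funMap_mem_acl {S : Set M} {n : ℕ} (f : L.Functions n) {x : Fin n → M}
    (hx : ∀ i, x i ∈ acl (M ≃[L] M) S) : Structure.funMap f x ∈ acl (M ≃[L] M) S := by
  refine ((Set.Finite.pi fun i => hx i).image (Structure.funMap f)).subset ?_
  rintro _ ⟨g, rfl⟩
  exact ⟨fun i => g • x i, fun i _ => ⟨g, rfl⟩, (Equiv.map_fun (g : M ≃[L] M) f x).symm⟩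

variable (L) in
def Substructure.acl (S : Set M) : L.Substructure M where
  carrier := MulAction.acl (M ≃[L] M) S
  fun_mem _ _ := funMap_mem_acl _

def IsStrongAmalgamationBase (B : L.Substructure M) : Prop :=
  ∀ C D : L.Substructure M, C.FG → D.FG → ∀ (ψ : B ↪[L] C) (χ : B ↪[L] D),
    ∃ (E : L.Substructure M) (_ : E.FG) (ψ' : C ↪[L] E) (χ' : D ↪[L] E),
      ψ'.comp ψ = χ'.comp χ ∧ Set.range ψ' ∩ Set.range χ' = Set.range (ψ'.comp ψ)

theorem exists_strongAmalgam_of_equiv {B C D : L.Substructure M} (hC : C.FG) (hD : D.FG)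
    (ψ : B ↪[L] C) (χ : B ↪[L] D) (σ τ : M ≃[L] M) (hcomm : ∀ b, σ (ψ b) = τ (χ b))
    (hinter : ∀ c ∈ C, ∀ d ∈ D, σ c = τ d → ∃ b, (ψ b : M) = c) :
    ∃ (E : L.Substructure M) (_ : E.FG) (ψ' : C ↪[L] E) (χ' : D ↪[L] E),
      ψ'.comp ψ = χ'.comp χ ∧ Set.range ψ' ∩ Set.range χ' = Set.range (ψ'.comp ψ) := by
  let E := C.map σ.toHom ⊔ D.map τ.toHom
  let ψ' : C ↪[L] E := (σ.toEmbedding.comp C.subtype).codRestrict E fun c =>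
    (le_sup_left : C.map σ.toHom ≤ E) (Substructure.mem_map_of_mem _ c.2)
  let χ' : D ↪[L] E := (τ.toEmbedding.comp D.subtype).codRestrict E fun d =>
    (le_sup_right : D.map τ.toHom ≤ E) (Substructure.mem_map_of_mem _ d.2)
  have hcomp : ψ'.comp ψ = χ'.comp χ := Embedding.ext fun b => Subtype.ext (hcomm b)
  refine ⟨E, (hC.map _).sup (hD.map _), ψ', χ', hcomp, ?_⟩
  refine Set.Subset.antisymm ?_ fun _ ⟨b, hb⟩ =>
    ⟨⟨ψ b, hb⟩, ⟨χ b, (DFunLike.congr_fun hcomp b).symm.trans hb⟩⟩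
  rintro _ ⟨⟨c, rfl⟩, ⟨d, hd⟩⟩
  obtain ⟨b, hb⟩ := hinter c c.2 d d.2 (congr_arg Subtype.val hd).symm
  exact ⟨b, congr_arg ψ' (Subtype.ext hb)⟩

theorem isStrongAmalgamationBase_of_acl_subset (huh : L.IsUltrahomogeneous M)
    (hlf : ∀ S : L.Substructure M, S.FG → (S : Set M).Finite) {B : L.Substructure M}
    (hB : B.FG) (hacl : acl (M ≃[L] M) (B : Set M) ⊆ B) : IsStrongAmalgamationBase B := by
  intro C D hC hD ψ χ
  obtain ⟨g, hg⟩ := huh B hB (C.subtype.comp ψ)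
  obtain ⟨h, hh⟩ := huh B hB (D.subtype.comp χ)
  have hgB (b : B) : (ψ b : M) = g b := DFunLike.congr_fun hg b
  have hhB (b : B) : (χ b : M) = h b := DFunLike.congr_fun hh b
  obtain ⟨k, hk⟩ := exists_disjoint_smul_of_infinite_orbits
    (G := fixingSubgroup (M ≃[L] M) (B : Set M))
    (((hlf D hD).smul_set (a := h⁻¹)).sdiff (t := B)) ((hlf C hC).smul_set (a := g⁻¹))
    fun a ha hfin => ha.2 (hacl hfin)
  have hkB (b : M) (hb : b ∈ B) : (k : M ≃[L] M) b = b := (mem_fixingSubgroup_iff _).1 k.2 b hb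
  refine exists_strongAmalgam_of_equiv hC hD ψ χ g⁻¹ (k * h⁻¹) (fun b => ?_) ?_
  · simp [hgB, hhB, hkB]
  intro c hc d hd hcd
  by_cases hdB : h⁻¹ d ∈ B
  · refine ⟨⟨_, hdB⟩, ?_⟩
    calc (ψ ⟨_, hdB⟩ : M) = g ((k * h⁻¹ : M ≃[L] M) d) := by
          rw [hgB, Equiv.mul_apply, hkB _ hdB]
      _ = c := by rw [← hcd]; simp
  · exact absurd ⟨c, hc, hcd⟩ <|
      Set.disjoint_left.1 hk (Set.smul_mem_smul_set ⟨⟨d, hd, rfl⟩, hdB⟩)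

theorem acl_subset_of_isStrongAmalgamationBase (huh : L.IsUltrahomogeneous M)
    {B : L.Substructure M} (hB : B.FG) (hsap : IsStrongAmalgamationBase B) :
    acl (M ≃[L] M) (B : Set M) ⊆ B := by
  intro b hb
  by_contra hbB
  let O := orbit (fixingSubgroup (M ≃[L] M) (B : Set M)) b
  let D := B ⊔ Substructure.closure L O
  have hD : D.FG := hB.sup (Substructure.fg_closure hb)
  have hBD : B ≤ D := le_sup_left
  have hOD : O ⊆ D := Substructure.subset_closure.trans (le_sup_right : _ ≤ D)
  obtain ⟨E, -, ψ', χ', hcomm, hrange⟩ := hsap D D hD hD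
    (Substructure.inclusion hBD) (Substructure.inclusion hBD)
  obtain ⟨u, hu⟩ := huh D hD (E.subtype.comp ψ')
  obtain ⟨v, hv⟩ := huh D hD (E.subtype.comp χ')
  have huD (x : D) : (ψ' x : M) = u x := DFunLike.congr_fun hu x
  have hvD (x : D) : (χ' x : M) = v x := DFunLike.congr_fun hv x
  have ht : v⁻¹ * u ∈ fixingSubgroup (M ≃[L] M) (B : Set M) := by
    refine (mem_fixingSubgroup_iff _).2 fun x hx => ?_
    have hux : u x = v x := by
      simpa [huD, hvD] using congr_arg Subtype.val (DFunLike.congr_fun hcomm ⟨x, hx⟩)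
    simp [hux]
  have hbO : b ∈ O := mem_orbit_self b
  have htbO : (v⁻¹ * u) • b ∈ O := ⟨⟨_, ht⟩, rfl⟩
  have hψχ : ψ' ⟨b, hOD hbO⟩ = χ' ⟨_, hOD htbO⟩ := Subtype.ext <| by simp [huD, hvD]
  obtain ⟨b', hb'⟩ :
      ψ' ⟨b, hOD hbO⟩ ∈ Set.range (ψ'.comp (Substructure.inclusion hBD)) :=
    hrange ▸ ⟨⟨_, rfl⟩, ⟨_, hψχ.symm⟩⟩
  have hb'b : (b' : M) = b := congr_arg Subtype.val (ψ'.injective hb')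
  exact hbB (hb'b ▸ b'.2)

end FirstOrder.Language

open FirstOrder FirstOrder.Language

theorem stmt_10_general {L : FirstOrder.Language}
    {M : Type*} [L.Structure M]
    (hlf : ∀ S : L.Substructure M, S.FG → (S : Set M).Finite)
    (huh : L.IsUltrahomogeneous M) :
    (∀ S : Set M, S.Finite →
      {b : M | {c : M | ∃ g : M ≃[L] M, (∀ s ∈ S, g s = s) ∧ g b = c}.Finite}.Finite) ↔
    (∀ B₀ : L.Substructure M, B₀.FG →
      ∃ B : L.Substructure M, B.FG ∧ (∃ _φ₀ : B₀ ↪[L] B, True) ∧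
        ∀ C D : L.Substructure M, C.FG → D.FG →
          ∀ (ψ : B ↪[L] C) (χ : B ↪[L] D),
            ∃ (E : L.Substructure M) (_ : E.FG) (ψ' : C ↪[L] E) (χ' : D ↪[L] E),
              ψ'.comp ψ = χ'.comp χ ∧
              Set.range ⇑ψ' ∩ Set.range ⇑χ' = Set.range ⇑(ψ'.comp ψ)) := by
  simp_rw [setOf_exists_equiv_fix_eq_orbit]
  constructor
  · intro hacl B₀ hB₀
    have hfin : (acl (M ≃[L] M) (B₀ : Set M)).Finite := hacl B₀ (hlf B₀ hB₀)
    have hB : (Substructure.acl L (B₀ : Set M)).FG :=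
      Substructure.fg_def.2 ⟨_, hfin, Substructure.closure_eq (Substructure.acl L _)⟩
    exact ⟨_, hB, ⟨Substructure.inclusion subset_acl, trivial⟩,
      isStrongAmalgamationBase_of_acl_subset huh hlf hB (acl_acl_subset hfin)⟩
  · intro hcsap S hS
    obtain ⟨B, hB, ⟨φ, -⟩, hsap⟩ := hcsap _ (Substructure.fg_closure hS)
    obtain ⟨g, hg⟩ := huh _ (Substructure.fg_closure hS) (B.subtype.comp φ)
    have hgS : g • S ⊆ B := by
      rintro _ ⟨s, hs, rfl⟩
      have hφ : (φ ⟨s, Substructure.subset_closure hs⟩ : M) = g s := DFunLike.congr_fun hg _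
      change g s ∈ B
      exact hφ ▸ (φ _).2
    refine ((hlf B hB).smul_set (a := g⁻¹)).subset fun b hb => ?_
    rw [Set.mem_smul_set_iff_inv_smul_mem, inv_inv]
    exact acl_subset_of_isStrongAmalgamationBase huh hB hsap
      (acl_mono hgS (smul_mem_acl_smul g hb))

/-- For a countably infinite, locally finite, ultrahomogeneous structure `M` in a countable
language `L` (i.e. a locally finite Fraïssé limit), the automorphism group `Aut(M)` has the
finite algebraic closure property iff the age of `M` has the cofinal strong amalgamation
property (stated via finitely generated substructures of `M`, which represent the age up to
isomorphism). -/
theorem stmt_10 {L : FirstOrder.Language} [Countable L.Symbols]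
    {M : Type*} [L.Structure M] [Countable M] [Infinite M]
    (hlf : ∀ S : L.Substructure M, S.FG → (S : Set M).Finite)
    (huh : L.IsUltrahomogeneous M) :
    (∀ S : Set M, S.Finite →
      {b : M | {c : M | ∃ g : M ≃[L] M, (∀ s ∈ S, g s = s) ∧ g b = c}.Finite}.Finite) ↔
    (∀ B₀ : L.Substructure M, B₀.FG →
      ∃ B : L.Substructure M, B.FG ∧ (∃ _φ₀ : B₀ ↪[L] B, True) ∧
        ∀ C D : L.Substructure M, C.FG → D.FG →
          ∀ (ψ : B ↪[L] C) (χ : B ↪[L] D),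
            ∃ (E : L.Substructure M) (_ : E.FG) (ψ' : C ↪[L] E) (χ' : D ↪[L] E),
              ψ'.comp ψ = χ'.comp χ ∧
              Set.range ⇑ψ' ∩ Set.range ⇑χ' = Set.range ⇑(ψ'.comp ψ)) :=
  stmt_10_general hlf huh
end

section
/- In the automorphism group Aut(ℚ, <) of the rational numbers as an ordered set, the set of those order automorphisms f of ℚ that have only finitely many finite orbits (i.e., {a ∈ ℚ : the orbit of a under f is finite} is finite) and infinitely many infinite orbits (i.e., the set of infinite orbits of f is infinite) is co-Haar null. -/
open MeasureTheory

/-- The topology of pointwise convergence on `Aut(ℚ, <) = (ℚ ≃o ℚ)`: the topology induced by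
the embedding `f ↦ (f, f⁻¹)` into `(ℚ → ℚ) × (ℚ → ℚ)`, where `ℚ` carries the *discrete*
topology (`⊥`). -/
instance instQAutTop : TopologicalSpace (ℚ ≃o ℚ) :=
  TopologicalSpace.induced
    (fun f : ℚ ≃o ℚ => ((⇑f, ⇑(f⁻¹ : ℚ ≃o ℚ)) : (ℚ → ℚ) × (ℚ → ℚ)))
    (@instTopologicalSpaceProd _ _
      (@Pi.topologicalSpace ℚ (fun _ => ℚ) (fun _ => ⊥))
      (@Pi.topologicalSpace ℚ (fun _ => ℚ) (fun _ => ⊥)))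

noncomputable instance instQAutMeas : MeasurableSpace (ℚ ≃o ℚ) := borel _

instance instQAutBorel : BorelSpace (ℚ ≃o ℚ) := ⟨rfl⟩

/-- The orbit `{fᵏ(a) : k ∈ ℤ}` of `a ∈ ℚ` under an order automorphism `f` of `ℚ`. -/
def orbitQ (f : ℚ ≃o ℚ) (a : ℚ) : Set ℚ :=
  {b | ∃ k : ℤ, (f ^ k) a = b}

open scoped ENNReal Function

/-!
The complement of the set in question consists of automorphisms with infinitely many fixed
points: a point moved by `f` has an infinite, monotone orbit, and if `a < f a` then the points of
`[a, f a)` lie in pairwise distinct orbits.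

To show that `W = {f | f has infinitely many fixed points}` is Haar null, note that `g W h` only
contains automorphisms agreeing with `g h` at infinitely many points. The witness measure is the
law of a random back-and-forth construction: at stage `m` the next point is sent to (or pulled
back from) one of `2 ^ m` admissible candidates, chosen uniformly and independently. Given the
past, at most one of the candidates agrees with a fixed injection `c`, so agreement happens at
stage `m` with probability at most `2⁻ᵐ`, and by Borel–Cantelli the random automorphism agrees
with `c` at only finitely many points almost surely.
-/

/-! ### Orbits -/

theorem OrderIso.strictMono_zpow_apply {α : Type*} [Preorder α] {f : α ≃o α} {a : α}
    (h : a < f a) : StrictMono fun n : ℤ => (f ^ n) a :=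
  strictMono_int_of_lt_succ fun n => by
    rw [zpow_add_one]
    exact (f ^ n).strictMono h

theorem orbitQ_inv (f : ℚ ≃o ℚ) (a : ℚ) : orbitQ f⁻¹ a = orbitQ f a := by
  ext b
  constructor <;> rintro ⟨k, rfl⟩ <;> exact ⟨-k, by simp⟩

theorem infinite_orbitQ_of_lt {f : ℚ ≃o ℚ} {a : ℚ} (h : a < f a) : (orbitQ f a).Infinite :=
  Set.infinite_of_injective_forall_mem (OrderIso.strictMono_zpow_apply h).injective
    fun n => ⟨n, rfl⟩

theorem infinite_orbitQ {f : ℚ ≃o ℚ} {a : ℚ} (h : f a ≠ a) : (orbitQ f a).Infinite := by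
  rcases h.lt_or_gt with h | h
  · rw [← orbitQ_inv]
    exact infinite_orbitQ_of_lt (f.lt_symm_apply.2 h)
  · exact infinite_orbitQ_of_lt h

theorem eq_of_mem_orbitQ_of_mem_Ico {f : ℚ ≃o ℚ} {a x y : ℚ} (h : a < f a)
    (hx : x ∈ Set.Ico a (f a)) (hy : y ∈ Set.Ico a (f a)) (hxy : y ∈ orbitQ f x) : y = x := by
  obtain ⟨k, rfl⟩ := hxy
  have hmono := OrderIso.strictMono_zpow_apply h
  have hk : k < 1 := hmono.lt_iff_lt.1 <|
    calc (f ^ k) a ≤ (f ^ k) x := (f ^ k).monotone hx.1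
      _ < (f ^ (1 : ℤ)) a := by simpa using hy.2
  have hk' : 0 < k + 1 := hmono.lt_iff_lt.1 <|
    calc (f ^ (0 : ℤ)) a ≤ (f ^ k) x := by simpa using hy.1
      _ < (f ^ k) (f a) := (f ^ k).strictMono hx.2
      _ = (f ^ (k + 1)) a := by rw [zpow_add_one]; rfl
  obtain rfl : k = 0 := by omega
  rfl

theorem infinite_setOf_infinite_orbitQ {f : ℚ ≃o ℚ} {a : ℚ} (h : f a ≠ a) :
    {O : Set ℚ | (∃ b, O = orbitQ f b) ∧ O.Infinite}.Infinite := by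
  wlog hlt : a < f a generalizing f
  · have hinv : a < f⁻¹ a := f.lt_symm_apply.2 (h.lt_of_le (not_lt.1 hlt))
    simpa only [orbitQ_inv] using this hinv.ne' hinv
  refine Set.infinite_of_injOn_mapsTo (f := orbitQ f) (fun x hx y hy hxy => ?_)
    (fun x hx => ⟨⟨x, rfl⟩, infinite_orbitQ ?_⟩) (Set.Ico_infinite hlt)
  · exact (eq_of_mem_orbitQ_of_mem_Ico hlt hx hy (hxy ▸ ⟨0, rfl⟩)).symm
  · exact (hx.2.trans_le (f.monotone hx.1)).ne'

theorem finite_orbitQ_and_infinite_orbitQ_of_finite_fixedPoints {f : ℚ ≃o ℚ}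
    (h : (Function.fixedPoints f).Finite) :
    {a : ℚ | (orbitQ f a).Finite}.Finite ∧
      {O : Set ℚ | (∃ a : ℚ, O = orbitQ f a) ∧ O.Infinite}.Infinite := by
  obtain ⟨a, ha⟩ := h.infinite_compl.nonempty
  exact ⟨h.subset fun b hb => not_not.1 fun hne => infinite_orbitQ hne hb,
    infinite_setOf_infinite_orbitQ ha⟩

/-! ### Extending finite partial isomorphisms -/

namespace Order.PartialIso

variable {α β : Type*} [LinearOrder α] [LinearOrder β]

def Compatible (f : PartialIso α β) (a : α) (b : β) : Prop :=
  ∀ p ∈ f.val, cmp p.1 a = cmp p.2 b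

def extend (f : PartialIso α β) {a : α} {b : β} (h : f.Compatible a b) : PartialIso α β :=
  ⟨insert (a, b) f.val, by
    intro p hp q hq
    rw [Finset.mem_insert] at hp hq
    rcases hp with rfl | hp <;> rcases hq with rfl | hq
    · simp only [cmp_self_eq_eq]
    · rw [cmp_eq_cmp_symm]
      exact h q hq
    · exact h p hp
    · exact f.prop p hp q hq⟩

theorem eq_of_mem_of_mem_left (f : PartialIso α β) {a : α} {b b' : β}
    (h : (a, b) ∈ f.val) (h' : (a, b') ∈ f.val) : b = b' :=
  (cmp_eq_eq_iff _ _).1 ((f.prop _ h _ h').symm.trans (cmp_self_eq_eq a))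

theorem eq_of_mem_of_mem_right (f : PartialIso α β) {a a' : α} {b : β}
    (h : (a, b) ∈ f.val) (h' : (a', b) ∈ f.val) : a = a' :=
  (cmp_eq_eq_iff _ _).1 ((f.prop _ h _ h').trans (cmp_self_eq_eq b))

theorem infinite_setOf_forall_cmp_eq [DenselyOrdered β] [NoMinOrder β] [NoMaxOrder β]
    (T : Finset β) {b : β} (hb : b ∉ T) : {b' | ∀ t ∈ T, cmp t b' = cmp t b}.Infinite := by
  have : Nonempty β := ⟨b⟩
  intro hfin
  -- Strictly between the largest element `M` of the set and the elements of `T` above `M`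
  -- there is a larger element of the set.
  set M := hfin.toFinset.max' ⟨b, hfin.mem_toFinset.2 fun _ _ => rfl⟩
  have hM : ∀ t ∈ T, cmp t M = cmp t b := hfin.mem_toFinset.1 (Finset.max'_mem _ _)
  have hMT : M ∉ T := fun hT =>
    hb <| (cmp_eq_eq_iff M b).1 ((hM M hT).symm.trans (cmp_self_eq_eq M)) ▸ hT
  obtain ⟨b', hMb', hb'⟩ := exists_between_finsets {M} (T.filter (M < ·)) (by simp +contextual)
  have hMb : M < b' := hMb' M (Finset.mem_singleton_self M)
  refine (Finset.le_max' _ b' (hfin.mem_toFinset.2 fun t ht => hM t ht ▸ ?_)).not_gt hMb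
  rcases lt_trichotomy t M with htM | rfl | hMt
  · rw [(cmp_eq_lt_iff _ _).2 htM, cmp_eq_lt_iff]
    exact htM.trans hMb
  · exact absurd ht hMT
  · rw [(cmp_eq_gt_iff _ _).2 hMt, cmp_eq_gt_iff]
    exact hb' t (Finset.mem_filter.2 ⟨ht, hMt⟩)

theorem infinite_setOf_compatible_right [DenselyOrdered β] [NoMinOrder β] [NoMaxOrder β]
    [Nonempty β] (f : PartialIso α β) {a : α} (ha : ¬∃ b, (a, b) ∈ f.val) :
    {b | f.Compatible a b}.Infinite := by
  obtain ⟨b, hb⟩ := exists_across f a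
  refine (infinite_setOf_forall_cmp_eq (f.val.image Prod.snd) (b := b) ?_).mono
    fun b' hb' p hp => (hb p hp).trans (hb' p.2 (Finset.mem_image_of_mem _ hp)).symm
  rintro hb'
  obtain ⟨p, hp, rfl⟩ := Finset.mem_image.1 hb'
  exact ha ⟨p.2, (cmp_eq_eq_iff _ _).1 ((hb p hp).trans (cmp_self_eq_eq _)) ▸ hp⟩

theorem mem_comm {f : PartialIso α β} {p : β × α} : p ∈ f.comm.val ↔ p.swap ∈ f.val := by
  change p ∈ f.val.image (Equiv.prodComm α β) ↔ _
  rcases p with ⟨b, a⟩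
  simp

theorem infinite_setOf_compatible_left [DenselyOrdered α] [NoMinOrder α] [NoMaxOrder α]
    [Nonempty α] (f : PartialIso α β) {b : β} (hb : ¬∃ a, (a, b) ∈ f.val) :
    {a | f.Compatible a b}.Infinite := by
  have := f.comm.infinite_setOf_compatible_right (a := b) (by
    simpa [mem_comm] using hb)
  convert this using 1
  ext a
  simp only [Set.mem_ofPred_eq, Compatible, Prod.forall, mem_comm, Prod.swap_prod_mk]
  rw [forall_comm]
  exact forall₂_congr fun _ _ => imp_congr_right fun _ => eq_comm

section ExtendLeft

variable [DenselyOrdered β] [NoMinOrder β] [NoMaxOrder β] [Nonempty β]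

noncomputable def rightCandidates (f : PartialIso α β) {a : α} (ha : ¬∃ b, (a, b) ∈ f.val) :
    ℕ ↪ β :=
  ((f.infinite_setOf_compatible_right ha).natEmbedding _).trans (Function.Embedding.subtype _)

theorem compatible_rightCandidates (f : PartialIso α β) {a : α} (ha : ¬∃ b, (a, b) ∈ f.val)
    (k : ℕ) : f.Compatible a (f.rightCandidates ha k) :=
  ((f.infinite_setOf_compatible_right ha).natEmbedding _ k).prop

open scoped Classical in
noncomputable def extendLeft (f : PartialIso α β) (a : α) (k : ℕ) : PartialIso α β :=
  if ha : ∃ b, (a, b) ∈ f.val then f else f.extend (f.compatible_rightCandidates ha k)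

theorem le_extendLeft (f : PartialIso α β) (a : α) (k : ℕ) : f ≤ f.extendLeft a k := by
  unfold extendLeft
  split_ifs
  exacts [le_rfl, Finset.subset_insert _ _]

theorem exists_mem_extendLeft (f : PartialIso α β) (a : α) (k : ℕ) :
    ∃ b, (a, b) ∈ (f.extendLeft a k).val := by
  unfold extendLeft
  split_ifs with ha
  exacts [ha, ⟨_, Finset.mem_insert_self _ _⟩]

theorem eq_of_mem_extendLeft {f : PartialIso α β} {a : α} {k : ℕ} {p : α × β}
    (hp : p ∈ (f.extendLeft a k).val) (hpf : p ∉ f.val) :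
    ∃ ha : ¬∃ b, (a, b) ∈ f.val, p = (a, f.rightCandidates ha k) := by
  unfold extendLeft at hp
  split_ifs at hp with ha
  · exact absurd hp hpf
  · exact ⟨ha, (Finset.mem_insert.1 hp).resolve_right hpf⟩

end ExtendLeft

section ExtendRight

variable [DenselyOrdered α] [NoMinOrder α] [NoMaxOrder α] [Nonempty α]

noncomputable def leftCandidates (f : PartialIso α β) {b : β} (hb : ¬∃ a, (a, b) ∈ f.val) :
    ℕ ↪ α :=
  ((f.infinite_setOf_compatible_left hb).natEmbedding _).trans (Function.Embedding.subtype _)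

theorem compatible_leftCandidates (f : PartialIso α β) {b : β} (hb : ¬∃ a, (a, b) ∈ f.val)
    (k : ℕ) : f.Compatible (f.leftCandidates hb k) b :=
  ((f.infinite_setOf_compatible_left hb).natEmbedding _ k).prop

open scoped Classical in
noncomputable def extendRight (f : PartialIso α β) (b : β) (k : ℕ) : PartialIso α β :=
  if hb : ∃ a, (a, b) ∈ f.val then f else f.extend (f.compatible_leftCandidates hb k)

theorem le_extendRight (f : PartialIso α β) (b : β) (k : ℕ) : f ≤ f.extendRight b k := by
  unfold extendRight
  split_ifs
  exacts [le_rfl, Finset.subset_insert _ _]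

theorem exists_mem_extendRight (f : PartialIso α β) (b : β) (k : ℕ) :
    ∃ a, (a, b) ∈ (f.extendRight b k).val := by
  unfold extendRight
  split_ifs with hb
  exacts [hb, ⟨_, Finset.mem_insert_self _ _⟩]

theorem eq_of_mem_extendRight {f : PartialIso α β} {b : β} {k : ℕ} {p : α × β}
    (hp : p ∈ (f.extendRight b k).val) (hpf : p ∉ f.val) :
    ∃ hb : ¬∃ a, (a, b) ∈ f.val, p = (f.leftCandidates hb k, b) := by
  unfold extendRight at hp
  split_ifs at hp with hb
  · exact absurd hp hpf
  · exact ⟨hb, (Finset.mem_insert.1 hp).resolve_right hpf⟩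

end ExtendRight

end Order.PartialIso

/-! ### Topology and Borel sets of `Aut(ℚ, <)` -/

theorem isOpen_setOf_apply_eq (y r : ℚ) : IsOpen {f : ℚ ≃o ℚ | f y = r} := by
  let _ : TopologicalSpace ℚ := ⊥
  have : DiscreteTopology ℚ := ⟨rfl⟩
  have hemb : Continuous fun f : ℚ ≃o ℚ => ((⇑f, ⇑f⁻¹) : (ℚ → ℚ) × (ℚ → ℚ)) :=
    continuous_induced_dom
  exact (isOpen_discrete {r}).preimage ((continuous_apply y).comp (continuous_fst.comp hemb))

theorem continuous_of_isLocallyConstant_apply {X : Type*} [TopologicalSpace X] {Φ : X → ℚ ≃o ℚ}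
    (h : ∀ a, IsLocallyConstant fun x => Φ x a) (h' : ∀ b, IsLocallyConstant fun x => (Φ x)⁻¹ b) :
    Continuous Φ := by
  let _ : TopologicalSpace ℚ := ⊥
  refine continuous_induced_rng.2 ?_
  exact (continuous_pi fun a => (h a).continuous).prodMk (continuous_pi fun b => (h' b).continuous)

def agreeInfinitelyOften (c : ℚ → ℚ) : Set (ℚ ≃o ℚ) := {f | {y | f y = c y}.Infinite}

theorem measurableSet_agreeInfinitelyOften (c : ℚ → ℚ) :
    MeasurableSet (agreeInfinitelyOften c) :=
  measurable_set_iff.2 (fun y => measurableSet_setOfPred.1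
    (isOpen_setOf_apply_eq y (c y)).measurableSet) MeasurableSet.setOfPred_infinite

theorem image_mul_mul_agreeInfinitelyOften_id_subset (g h : ℚ ≃o ℚ) :
    (fun b => g * b * h) '' agreeInfinitelyOften id ⊆ agreeInfinitelyOften ⇑(g * h) := by
  rintro _ ⟨b, hb, rfl⟩
  exact (hb.preimage fun z _ => h.surjective z).mono fun y (hy : b (h y) = h y) => congrArg g hy

/-! ### Independent uniform choices -/

theorem isLocallyConstant_of_forall_eq_on_finite {ι Y : Type*} {X : ι → Type*}
    [∀ i, TopologicalSpace (X i)] [∀ i, DiscreteTopology (X i)] {F : (∀ i, X i) → Y}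
    {I : Set ι} (hI : I.Finite) (hF : ∀ x y, (∀ i ∈ I, x i = y i) → F x = F y) :
    IsLocallyConstant F :=
  (IsLocallyConstant.iff_eventually_eq F).2 fun x =>
    Filter.mem_of_superset (set_pi_mem_nhds hI fun i _ => isOpen_discrete {x i} |>.mem_nhds rfl)
      fun y hy => hF y x hy

/-- The `m`-th coordinate indexes the candidate chosen at stage `m` of the back-and-forth
construction; `2 ^ m` options make the probabilities of agreement at stage `m` summable. -/
abbrev Choices : Type := ∀ m : ℕ, Fin (2 ^ m)

noncomputable def uniformChoices : Measure Choices := Measure.addHaarMeasure ⊤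

instance : IsProbabilityMeasure uniformChoices :=
  ⟨by rw [← TopologicalSpace.PositiveCompacts.coe_top]; exact Measure.addHaarMeasure_self⟩

instance : uniformChoices.IsAddLeftInvariant := by
  unfold uniformChoices
  infer_instance

theorem measure_setOf_apply_mem_le {m : ℕ} (K : Choices → Set (Fin (2 ^ m)))
    (hK : ∀ ω, (K ω).Subsingleton) (hloc : ∀ ω ω', (∀ i < m, ω i = ω' i) → K ω = K ω') :
    uniformChoices {ω | ω m ∈ K ω} ≤ (2 ^ m)⁻¹ := by
  -- The `2 ^ m` disjoint sets `A t` are translates of `A 0`, as `K ω` ignores coordinate `m`.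
  set A : Fin (2 ^ m) → Set Choices := fun t => {ω | ω m + t ∈ K ω}
  have hA : ∀ t, A t = (Pi.single m t + ·) ⁻¹' A 0 := fun t => by
    ext ω
    have hK' : K (Pi.single m t + ω) = K ω := hloc _ _ fun i hi => by simp [hi.ne]
    simp only [A, Set.mem_preimage, Set.mem_ofPred_eq, Pi.add_apply, Pi.single_eq_same, add_zero,
      hK']
    rw [add_comm]
  have hopen : ∀ t, IsOpen (A t) := fun t => by
    simpa using isLocallyConstant_of_forall_eq_on_finite (Set.finite_Iic m)
      (F := fun ω : Choices => ω m + t ∈ K ω) (fun ω ω' h => by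
        rw [h m (Set.mem_Iic.2 le_rfl), hloc ω ω' fun i hi => h i hi.le]) {True}
  have hdisj : Pairwise (Disjoint on A) := fun t t' hne =>
    Set.disjoint_left.2 fun ω h h' => hne (add_left_cancel (hK ω h h'))
  have hsum : (2 ^ m : ℝ≥0∞) * uniformChoices (A 0) ≤ 1 := calc
    (2 ^ m : ℝ≥0∞) * uniformChoices (A 0) = ∑ _t : Fin (2 ^ m), uniformChoices (A 0) := by
      rw [Finset.sum_const, Finset.card_univ, Fintype.card_fin, nsmul_eq_mul, Nat.cast_pow,
        Nat.cast_ofNat]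
    _ = ∑ t, uniformChoices (A t) :=
      Finset.sum_congr rfl fun t _ => by rw [hA t, measure_preimage_add]
    _ = uniformChoices (⋃ t, A t) :=
      (tsum_fintype _).symm.trans (measure_iUnion hdisj fun t => (hopen t).measurableSet).symm
    _ ≤ 1 := prob_le_one
  simpa [A, ENNReal.le_inv_iff_mul_le, mul_comm] using hsum

/-! ### The random back-and-forth automorphism -/

open Order PartialIso

noncomputable def step (m k : ℕ) (f : PartialIso ℚ ℚ) : PartialIso ℚ ℚ :=
  ((Denumerable.eqv (ℚ ⊕ ℚ)).symm m).elim (f.extendLeft · k) (f.extendRight · k)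

noncomputable def backAndForth (ω : Choices) : ℕ → PartialIso ℚ ℚ
  | 0 => default
  | m + 1 => step m (ω m) (backAndForth ω m)

theorem le_step (m k : ℕ) (f : PartialIso ℚ ℚ) : f ≤ step m k f := by
  unfold step
  cases (Denumerable.eqv (ℚ ⊕ ℚ)).symm m
  exacts [f.le_extendLeft _ _, f.le_extendRight _ _]

theorem monotone_backAndForth (ω : Choices) : Monotone (backAndForth ω) :=
  monotone_nat_of_le_succ fun m => le_step m (ω m) _

theorem exists_mem_backAndForth_left (ω : Choices) (a : ℚ) :
    ∃ b, (a, b) ∈ (backAndForth ω (Denumerable.eqv (ℚ ⊕ ℚ) (.inl a) + 1)).val := by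
  simp only [backAndForth, step, Equiv.symm_apply_apply, Sum.elim_inl]
  exact exists_mem_extendLeft _ _ _

theorem exists_mem_backAndForth_right (ω : Choices) (b : ℚ) :
    ∃ a, (a, b) ∈ (backAndForth ω (Denumerable.eqv (ℚ ⊕ ℚ) (.inr b) + 1)).val := by
  simp only [backAndForth, step, Equiv.symm_apply_apply, Sum.elim_inr]
  exact exists_mem_extendRight _ _ _

theorem backAndForth_congr {ω ω' : Choices} {m : ℕ} (h : ∀ i < m, ω i = ω' i) :
    backAndForth ω m = backAndForth ω' m := by
  induction m with
  | zero => rfl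
  | succ m ih =>
    simp only [backAndForth, h m m.lt_succ_self, ih fun i hi => h i (hi.trans m.lt_succ_self)]

theorem mem_backAndForth_max {ω : Choices} {m m' : ℕ} {p q : ℚ × ℚ}
    (hp : p ∈ (backAndForth ω m).val) (hq : q ∈ (backAndForth ω m').val) :
    p ∈ (backAndForth ω (max m m')).val ∧ q ∈ (backAndForth ω (max m m')).val :=
  ⟨monotone_backAndForth ω (le_max_left m m') hp, monotone_backAndForth ω (le_max_right m m') hq⟩

noncomputable def limitFun (ω : Choices) (a : ℚ) : ℚ := (exists_mem_backAndForth_left ω a).choose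

noncomputable def limitInv (ω : Choices) (b : ℚ) : ℚ := (exists_mem_backAndForth_right ω b).choose

theorem mem_backAndForth_limitFun (ω : Choices) (a : ℚ) :
    (a, limitFun ω a) ∈ (backAndForth ω (Denumerable.eqv (ℚ ⊕ ℚ) (.inl a) + 1)).val :=
  (exists_mem_backAndForth_left ω a).choose_spec

theorem mem_backAndForth_limitInv (ω : Choices) (b : ℚ) :
    (limitInv ω b, b) ∈ (backAndForth ω (Denumerable.eqv (ℚ ⊕ ℚ) (.inr b) + 1)).val :=
  (exists_mem_backAndForth_right ω b).choose_spec

theorem limitFun_eq_of_mem {ω : Choices} {m : ℕ} {a b : ℚ} (h : (a, b) ∈ (backAndForth ω m).val) :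
    limitFun ω a = b :=
  have h' := mem_backAndForth_max (mem_backAndForth_limitFun ω a) h
  eq_of_mem_of_mem_left _ h'.1 h'.2

theorem limitInv_eq_of_mem {ω : Choices} {m : ℕ} {a b : ℚ} (h : (a, b) ∈ (backAndForth ω m).val) :
    limitInv ω b = a :=
  have h' := mem_backAndForth_max (mem_backAndForth_limitInv ω b) h
  eq_of_mem_of_mem_right _ h'.1 h'.2

noncomputable def randomIso (ω : Choices) : ℚ ≃o ℚ :=
  OrderIso.ofCmpEqCmp (limitFun ω) (limitInv ω) fun a b =>
    have h := mem_backAndForth_max (mem_backAndForth_limitFun ω a) (mem_backAndForth_limitInv ω b)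
    (backAndForth ω _).prop _ h.1 _ h.2

theorem continuous_randomIso : Continuous randomIso := by
  refine continuous_of_isLocallyConstant_apply (fun a => ?_) (fun b => ?_)
  · exact isLocallyConstant_of_forall_eq_on_finite (Set.finite_Iio _) fun ω ω' h =>
      limitFun_eq_of_mem ((backAndForth_congr h).symm ▸ mem_backAndForth_limitFun ω' a)
  · exact isLocallyConstant_of_forall_eq_on_finite (Set.finite_Iio _) fun ω ω' h =>
      limitInv_eq_of_mem ((backAndForth_congr h).symm ▸ mem_backAndForth_limitInv ω' b)

/-! ### Agreement with a fixed injection -/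

def agreeIndices (c : ℚ → ℚ) (m : ℕ) (f : PartialIso ℚ ℚ) : Set ℕ :=
  {k | ∃ p ∈ (step m k f).val, p ∉ f.val ∧ p.2 = c p.1}

theorem subsingleton_agreeIndices {c : ℚ → ℚ} (hc : c.Injective) (m : ℕ) (f : PartialIso ℚ ℚ) :
    (agreeIndices c m f).Subsingleton := by
  rintro k ⟨p, hp, hpf, hpc⟩ k' ⟨p', hp', hpf', hpc'⟩
  revert hp hp'
  unfold step
  rcases (Denumerable.eqv (ℚ ⊕ ℚ)).symm m with a | b <;> intro hp hp'
  · obtain ⟨ha, rfl⟩ := eq_of_mem_extendLeft hp hpf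
    obtain ⟨ha', rfl⟩ := eq_of_mem_extendLeft hp' hpf'
    exact (f.rightCandidates ha).injective (hpc.trans hpc'.symm)
  · obtain ⟨hb, rfl⟩ := eq_of_mem_extendRight hp hpf
    obtain ⟨hb', rfl⟩ := eq_of_mem_extendRight hp' hpf'
    exact (f.leftCandidates hb).injective (hc (hpc.symm.trans hpc'))

def agreeEvent (c : ℚ → ℚ) (m : ℕ) : Set Choices :=
  {ω | (ω m : ℕ) ∈ agreeIndices c m (backAndForth ω m)}

theorem measure_agreeEvent_le {c : ℚ → ℚ} (hc : c.Injective) (m : ℕ) :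
    uniformChoices (agreeEvent c m) ≤ (2 ^ m)⁻¹ :=
  measure_setOf_apply_mem_le (fun ω => Fin.val ⁻¹' agreeIndices c m (backAndForth ω m))
    (fun _ => (subsingleton_agreeIndices hc m _).preimage Fin.val_injective)
    (fun _ _ h => by rw [backAndForth_congr h])

theorem mem_backAndForth_of_notMem_agreeEvent {c : ℚ → ℚ} {ω : Choices} {M : ℕ}
    (hM : ∀ m ≥ M, ω ∉ agreeEvent c m) :
    ∀ n, ∀ p ∈ (backAndForth ω n).val, p.2 = c p.1 → p ∈ (backAndForth ω M).val
  | 0, p, hp, _ => absurd hp (Finset.notMem_empty p)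
  | n + 1, p, hp, hpc => by
    by_cases hpn : p ∈ (backAndForth ω n).val
    · exact mem_backAndForth_of_notMem_agreeEvent hM n p hpn hpc
    · have hn : n < M := not_le.1 fun h => hM n h ⟨p, hp, hpn, hpc⟩
      exact monotone_backAndForth ω hn hp

theorem finite_setOf_limitFun_eq {c : ℚ → ℚ} {ω : Choices} {M : ℕ}
    (hM : ∀ m ≥ M, ω ∉ agreeEvent c m) : {y | limitFun ω y = c y}.Finite :=
  ((backAndForth ω M).val.image Prod.fst).finite_toSet.subset fun y hy =>
    Finset.mem_image.2
      ⟨_, mem_backAndForth_of_notMem_agreeEvent hM _ _ (mem_backAndForth_limitFun ω y) hy, rfl⟩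

theorem measure_randomIso_preimage_agreeInfinitelyOften {c : ℚ → ℚ} (hc : c.Injective) :
    uniformChoices (randomIso ⁻¹' agreeInfinitelyOften c) = 0 := by
  have hsum : ∑' m, uniformChoices (agreeEvent c m) ≠ ∞ := by
    refine ne_top_of_le_ne_top (b := ∑' m : ℕ, (2⁻¹ : ℝ≥0∞) ^ m) ?_
      (ENNReal.tsum_le_tsum fun m => (measure_agreeEvent_le hc m).trans_eq ENNReal.inv_pow)
    rw [ENNReal.tsum_geometric, ENNReal.one_sub_inv_two, inv_inv]
    exact ENNReal.ofNat_ne_top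
  refine measure_mono_null (fun ω hω => ?_) (measure_setOfPred_frequently_eq_zero hsum)
  by_contra h
  obtain ⟨M, hM⟩ := Filter.eventually_atTop.1 (Filter.not_frequently.1 h)
  exact hω (finite_setOf_limitFun_eq hM)

/-- In `Aut(ℚ, <)`, almost every element has only finitely many finite orbits and infinitely
many infinite orbits. -/
theorem stmt_11 :
    HaarNull ({f : ℚ ≃o ℚ |
      {a : ℚ | (orbitQ f a).Finite}.Finite ∧
      {O : Set ℚ | (∃ a : ℚ, O = orbitQ f a) ∧ O.Infinite}.Infinite}ᶜ) := by
  refine ⟨agreeInfinitelyOften id, fun f hf hfin => hf ?_, measurableSet_agreeInfinitelyOften id,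
    uniformChoices.map randomIso,
    Measure.isProbabilityMeasure_map continuous_randomIso.aemeasurable, fun g h => measure_mono_null (image_mul_mul_agreeInfinitelyOften_id_subset g h) ?_⟩
  · exact finite_orbitQ_and_infinite_orbitQ_of_finite_fixedPoints hfin
  · rw [Measure.map_apply continuous_randomIso.measurable (measurableSet_agreeInfinitelyOften _)]
    exact measure_randomIso_preimage_agreeInfinitelyOften (g * h).injective
end

section
/- Let V be a countably infinite set and let R be a symmetric, irreflexive binary relation on V such that (V, R) is a random graph, i.e., for every pair of finite disjoint sets A, B ⊆ V there exists v ∈ V with v R x for all x ∈ A and ¬(v R y) for all y ∈ B. Then the automorphism group Aut(V, R) can be decomposed into the union of a conjugacy-invariant Haar null set and a meager set: there exist sets H, M ⊆ Aut(V, R) with Aut(V, R) = H ∪ M, where H is Haar null and invariant under conjugacy, and M is meager. -/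
open MeasureTheory

/-- The automorphism group of the graph `(V, R)`, as a (closed) subgroup of `S∞`. -/
def graphAut {V : Type*} (R : V → V → Prop) : Subgroup (Equiv.Perm V) where
  carrier := {f | ∀ x y, R x y ↔ R (f x) (f y)}
  one_mem' := by intro x y; rfl
  mul_mem' := by
    intro f g hf hg x y
    simpa [Equiv.Perm.mul_apply] using (hg x y).trans (hf (g x) (g y))
  inv_mem' := by
    intro f hf x y
    simpa using (hf (f⁻¹ x) (f⁻¹ y)).symm

/-!
The witness is `H = {f | f fixes infinitely many points}`, which is visibly invariant under
conjugation, and `M = Hᶜ`.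

`H` is comeagre: for every finite `S` the automorphisms fixing a point outside `S` form an open
dense set. Density is the extension property again: restrict a given automorphism to a finite set,
add a fresh vertex adjacent to nothing seen so far as a fixed point, and extend this finite partial
isomorphism to an automorphism by back-and-forth.

`H` is Haar null: run the back-and-forth construction from the empty map, choosing at stage `k`
uniformly among the first `2 ^ k` of the infinitely many admissible images. A translate `g H h` only
contains automorphisms agreeing with `g h` at infinitely many points. For any permutation `s`, at
most one choice at stage `k` makes the new pair lie on the graph of `s`, so this happens with
probability at most `2⁻ᵏ`; by Borel–Cantelli the random automorphism agrees with `s` at only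
finitely many points almost surely. Its law therefore witnesses that `H` is Haar null.
-/

namespace RandomGraph

open Filter Topology MeasureTheory ProbabilityTheory
open scoped ENNReal

structure IsRandomGraph {V : Type*} (R : V → V → Prop) : Prop where
  symm : ∀ x y, R x y → R y x
  irrefl : ∀ x, ¬ R x x
  extension : ∀ A B : Set V, A.Finite → B.Finite → Disjoint A B →
    ∃ v : V, (∀ x ∈ A, R v x) ∧ ∀ y ∈ B, ¬ R v y

variable {V : Type*} {R : V → V → Prop}

theorem IsRandomGraph.infinite_setOf_adj_iff_mem (hR : IsRandomGraph R) {S N : Set V}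
    (hS : S.Finite) (hN : N ⊆ S) : {z | z ∉ S ∧ ∀ x ∈ S, R z x ↔ x ∈ N}.Infinite := by
  intro hfin
  set Z := {z | z ∉ S ∧ ∀ x ∈ S, R z x ↔ x ∈ N}
  -- a vertex adjacent to everything in `S ∪ Z` cannot lie in `S ∪ Z`, by irreflexivity
  obtain ⟨c, hc, -⟩ := hR.extension (S ∪ Z) ∅ (hS.union hfin) Set.finite_empty
    (Set.disjoint_empty _)
  have hc' : c ∉ S ∪ Z := fun h => hR.irrefl c (hc c h)
  obtain ⟨z, hzN, hzB⟩ := hR.extension N ((S ∪ Z) \ N ∪ {c}) (hS.subset hN)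
    (((hS.union hfin).sdiff).union (Set.finite_singleton c))
    (Set.disjoint_union_right.2 ⟨Set.disjoint_sdiff_right,
      Set.disjoint_singleton_right.2 fun h => hc' (Or.inl (hN h))⟩)
  have hz : z ∉ S ∪ Z := fun h => hzB c (Or.inr rfl) (hR.symm _ _ (hc z h))
  refine hz (Or.inr ⟨fun h => hz (Or.inl h), fun x hx => ⟨fun hzx => ?_, hzN x⟩⟩)
  by_contra hxN
  exact hzB x (Or.inl ⟨Or.inl hx, hxN⟩) hzx

def IsPartialIso (R : V → V → Prop) (P : Set (V × V)) : Prop :=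
  ∀ p ∈ P, ∀ q ∈ P, (p.1 = q.1 ↔ p.2 = q.2) ∧ (R p.1 q.1 ↔ R p.2 q.2)

theorem isPartialIso_empty : IsPartialIso R ∅ := fun _ h => h.elim

theorem IsPartialIso.preimage_swap {P : Set (V × V)} (hP : IsPartialIso R P) :
    IsPartialIso R (Prod.swap ⁻¹' P) :=
  fun _ hp _ hq => ⟨(hP _ hp _ hq).1.symm, (hP _ hp _ hq).2.symm⟩

theorem IsPartialIso.insert (hsymm : ∀ x y, R x y → R y x) {P : Set (V × V)}
    (hP : IsPartialIso R P) {a b : V}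
    (hab : ∀ p ∈ P, (a = p.1 ↔ b = p.2) ∧ (R a p.1 ↔ R b p.2)) (haa : R a a ↔ R b b) :
    IsPartialIso R (insert (a, b) P) := by
  have hsymm' : ∀ x y, R x y ↔ R y x := fun x y => ⟨hsymm x y, hsymm y x⟩
  intro p hp q hq
  rcases hp with rfl | hp <;> rcases hq with rfl | hq
  · exact ⟨iff_of_true rfl rfl, haa⟩
  · exact hab q hq
  · exact ⟨eq_comm.trans ((hab p hp).1.trans eq_comm), by
      rw [hsymm' p.1, hsymm' p.2]; exact (hab p hp).2⟩
  · exact hP p hp q hq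

theorem isPartialIso_iUnion {P : ℕ → Set (V × V)} (hmono : Monotone P)
    (hP : ∀ k, IsPartialIso R (P k)) : IsPartialIso R (⋃ k, P k) := by
  simp only [IsPartialIso, Set.mem_iUnion]
  rintro p ⟨i, hp⟩ q ⟨j, hq⟩
  exact hP (max i j) p (hmono (le_max_left i j) hp) q (hmono (le_max_right i j) hq)

theorem isPartialIso_graphOn {f : Equiv.Perm V} (hf : f ∈ graphAut R) (A : Set V) :
    IsPartialIso R ((fun x => (x, f x)) '' A) := by
  rintro _ ⟨x, -, rfl⟩ _ ⟨y, -, rfl⟩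
  exact ⟨f.injective.eq_iff.symm, hf x y⟩

section toPerm

variable {P : Set (V × V)} (hP : IsPartialIso R P) (hdom : ∀ x, ∃ y, (x, y) ∈ P)
  (hran : ∀ y, ∃ x, (x, y) ∈ P)

noncomputable def IsPartialIso.toPerm : Equiv.Perm V :=
  Equiv.ofBijective (fun x => (hdom x).choose) <| by
    refine ⟨fun x x' h => (hP _ (hdom x).choose_spec _ (hdom x').choose_spec).1.2 h,
      fun y => ?_⟩
    obtain ⟨x, hx⟩ := hran y
    exact ⟨x, (hP _ (hdom x).choose_spec _ hx).1.1 rfl⟩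

theorem IsPartialIso.mem_toPerm (x : V) : (x, hP.toPerm hdom hran x) ∈ P :=
  (hdom x).choose_spec

theorem IsPartialIso.toPerm_apply_eq_iff {x y : V} :
    hP.toPerm hdom hran x = y ↔ (x, y) ∈ P :=
  ⟨fun h => h ▸ hP.mem_toPerm hdom hran x,
    fun h => (hP _ (hP.mem_toPerm hdom hran x) _ h).1.1 rfl⟩

theorem IsPartialIso.toPerm_mem_graphAut : hP.toPerm hdom hran ∈ graphAut R := fun x y =>
  (hP _ (hP.mem_toPerm hdom hran x) _ (hP.mem_toPerm hdom hran y)).2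

end toPerm

def candidates (R : V → V → Prop) (P : Set (V × V)) (a : V) : Set V :=
  {z | z ∉ Prod.snd '' P ∧ ∀ p ∈ P, R a p.1 ↔ R z p.2}

theorem IsRandomGraph.infinite_candidates (hR : IsRandomGraph R) {P : Set (V × V)}
    (hP : IsPartialIso R P) (hfin : P.Finite) (a : V) : (candidates R P a).Infinite := by
  refine (hR.infinite_setOf_adj_iff_mem (hfin.image Prod.snd)
    (Set.image_mono (Set.sep_subset P fun p => R a p.1))).mono ?_
  rintro z ⟨hzP, hz⟩
  refine ⟨hzP, fun p hp => ?_⟩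
  rw [hz p.2 ⟨p, hp, rfl⟩]
  constructor
  · exact fun h => ⟨p, ⟨hp, h⟩, rfl⟩
  · rintro ⟨q, ⟨hq, hqa⟩, hqp⟩
    rwa [← (hP q hq p hp).1.2 hqp]

open Classical in
noncomputable def candidate (R : V → V → Prop) (P : Set (V × V)) (a : V) (n : ℕ) : V :=
  if h : (candidates R P a).Infinite then h.natEmbedding _ n else a

theorem candidate_mem {P : Set (V × V)} {a : V} (h : (candidates R P a).Infinite) (n : ℕ) :
    candidate R P a n ∈ candidates R P a := by
  rw [candidate, dif_pos h]
  exact (h.natEmbedding _ n).2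

theorem candidate_injective {P : Set (V × V)} {a : V} (h : (candidates R P a).Infinite) :
    Function.Injective (candidate R P a) := by
  intro m n hmn
  simp only [candidate, dif_pos h] at hmn
  exact (h.natEmbedding _).injective (Subtype.ext hmn)

open Classical in
noncomputable def forth (R : V → V → Prop) (P : Set (V × V)) (a : V) (n : ℕ) : Set (V × V) :=
  if a ∈ Prod.fst '' P then P else insert (a, candidate R P a n) P

noncomputable def back (R : V → V → Prop) (P : Set (V × V)) (b : V) (n : ℕ) : Set (V × V) :=
  Prod.swap ⁻¹' forth R (Prod.swap ⁻¹' P) b n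

theorem subset_forth (P : Set (V × V)) (a : V) (n : ℕ) : P ⊆ forth R P a n := by
  unfold forth
  split_ifs
  exacts [subset_rfl, Set.subset_insert _ _]

theorem subset_back (P : Set (V × V)) (b : V) (n : ℕ) : P ⊆ back R P b n :=
  fun _ hp => subset_forth (Prod.swap ⁻¹' P) b n (by simpa using hp)

theorem mem_fst_image_forth (P : Set (V × V)) (a : V) (n : ℕ) :
    a ∈ Prod.fst '' forth R P a n := by
  unfold forth
  split_ifs with ha
  exacts [ha, ⟨_, Set.mem_insert _ _, rfl⟩]

theorem mem_snd_image_back (P : Set (V × V)) (b : V) (n : ℕ) :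
    b ∈ Prod.snd '' back R P b n := by
  obtain ⟨p, hp, hpb⟩ := mem_fst_image_forth (R := R) (Prod.swap ⁻¹' P) b n
  exact ⟨p.swap, by simpa [back] using hp, hpb⟩

theorem finite_forth {P : Set (V × V)} (hfin : P.Finite) (a : V) (n : ℕ) :
    (forth R P a n).Finite := by
  unfold forth
  split_ifs
  exacts [hfin, hfin.insert _]

theorem finite_back {P : Set (V × V)} (hfin : P.Finite) (b : V) (n : ℕ) :
    (back R P b n).Finite :=
  (finite_forth (hfin.preimage Prod.swap_injective.injOn) b n).preimage
    Prod.swap_injective.injOn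

theorem IsPartialIso.forth (hR : IsRandomGraph R) {P : Set (V × V)} (hP : IsPartialIso R P)
    (hfin : P.Finite) (a : V) (n : ℕ) : IsPartialIso R (forth R P a n) := by
  unfold RandomGraph.forth
  split_ifs with ha
  · exact hP
  obtain ⟨hz, hzP⟩ := candidate_mem (hR.infinite_candidates hP hfin a) n
  refine hP.insert hR.symm (fun p hp => ⟨?_, hzP p hp⟩)
    (iff_of_false (hR.irrefl a) (hR.irrefl _))
  exact iff_of_false (fun h => ha ⟨p, hp, h.symm⟩) (fun h => hz ⟨p, hp, h.symm⟩)

theorem IsPartialIso.back (hR : IsRandomGraph R) {P : Set (V × V)} (hP : IsPartialIso R P)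
    (hfin : P.Finite) (b : V) (n : ℕ) : IsPartialIso R (back R P b n) :=
  (hP.preimage_swap.forth hR (hfin.preimage Prod.swap_injective.injOn) b n).preimage_swap

theorem subsingleton_setOf_forth_new (hR : IsRandomGraph R) {P : Set (V × V)}
    (hP : IsPartialIso R P) (hfin : P.Finite) (a : V) (f : V → V) :
    {n | ∃ p ∈ forth R P a n, p ∉ P ∧ p.2 = f p.1}.Subsingleton := by
  have key : ∀ {n}, n ∈ {n | ∃ p ∈ forth R P a n, p ∉ P ∧ p.2 = f p.1} →
      candidate R P a n = f a := by
    rintro n ⟨p, hp, hpP, hpf⟩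
    unfold forth at hp
    split_ifs at hp
    · exact absurd hp hpP
    · obtain rfl | hp := hp
      exacts [hpf, absurd hp hpP]
  exact fun m hm n hn => candidate_injective (hR.infinite_candidates hP hfin a)
    ((key hm).trans (key hn).symm)

theorem subsingleton_setOf_back_new (hR : IsRandomGraph R) {P : Set (V × V)}
    (hP : IsPartialIso R P) (hfin : P.Finite) (b : V) (s : Equiv.Perm V) :
    {n | ∃ p ∈ back R P b n, p ∉ P ∧ p.2 = s p.1}.Subsingleton := by
  refine (subsingleton_setOf_forth_new hR hP.preimage_swap
    (hfin.preimage Prod.swap_injective.injOn) b ⇑s⁻¹).anti ?_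
  rintro n ⟨p, hp, hpP, hps⟩
  exact ⟨p.swap, hp, hpP, by simp [hps]⟩

/-- Stage `2m` puts `e m` into the domain, stage `2m + 1` puts it into the range; `n` selects
the candidate. -/
noncomputable def bfStep (R : V → V → Prop) (e : ℕ ≃ V) (k n : ℕ) (P : Set (V × V)) :
    Set (V × V) :=
  if k % 2 = 0 then forth R P (e (k / 2)) n else back R P (e (k / 2)) n

noncomputable def bfChain (R : V → V → Prop) (e : ℕ ≃ V) (P₀ : Set (V × V)) (ω : ℕ → ℕ) :
    ℕ → Set (V × V)
  | 0 => P₀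
  | k + 1 => bfStep R e k (ω k) (bfChain R e P₀ ω k)

section bfChain

variable (e : ℕ ≃ V) {P₀ : Set (V × V)}

theorem bfChain_congr {ω ω' : ℕ → ℕ} :
    ∀ {k}, (∀ i < k, ω i = ω' i) → bfChain R e P₀ ω k = bfChain R e P₀ ω' k
  | 0, _ => rfl
  | k + 1, h => by
    simp only [bfChain, h k k.lt_succ_self,
      bfChain_congr fun i hi => h i (hi.trans k.lt_succ_self)]

theorem monotone_bfChain (ω : ℕ → ℕ) : Monotone (bfChain R e P₀ ω) := by
  refine monotone_nat_of_le_succ fun k => ?_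
  change _ ⊆ bfStep R e k (ω k) _
  unfold bfStep
  split_ifs
  exacts [subset_forth _ _ _, subset_back _ _ _]

theorem finite_bfChain (hfin : P₀.Finite) (ω : ℕ → ℕ) : ∀ k, (bfChain R e P₀ ω k).Finite
  | 0 => hfin
  | k + 1 => by
    change (bfStep R e k (ω k) _).Finite
    unfold bfStep
    split_ifs
    exacts [finite_forth (finite_bfChain hfin ω k) _ _, finite_back (finite_bfChain hfin ω k) _ _]

theorem isPartialIso_bfChain (hR : IsRandomGraph R) (hP₀ : IsPartialIso R P₀)
    (hfin : P₀.Finite) (ω : ℕ → ℕ) : ∀ k, IsPartialIso R (bfChain R e P₀ ω k)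
  | 0 => hP₀
  | k + 1 => by
    change IsPartialIso R (bfStep R e k (ω k) _)
    unfold bfStep
    split_ifs
    exacts [(isPartialIso_bfChain hR hP₀ hfin ω k).forth hR (finite_bfChain e hfin ω k) _ _,
      (isPartialIso_bfChain hR hP₀ hfin ω k).back hR (finite_bfChain e hfin ω k) _ _]

theorem exists_mem_bfChain_left (ω : ℕ → ℕ) (x : V) :
    ∃ y, (x, y) ∈ bfChain R e P₀ ω (2 * e.symm x + 1) := by
  have h : x ∈ Prod.fst '' bfChain R e P₀ ω (2 * e.symm x + 1) := by
    simpa [bfChain, bfStep] using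
      mem_fst_image_forth (R := R) (bfChain R e P₀ ω (2 * e.symm x)) x (ω (2 * e.symm x))
  obtain ⟨p, hp, rfl⟩ := h
  exact ⟨p.2, hp⟩

theorem exists_mem_bfChain_right (ω : ℕ → ℕ) (y : V) :
    ∃ x, (x, y) ∈ bfChain R e P₀ ω (2 * e.symm y + 2) := by
  have hk : (2 * e.symm y + 1) / 2 = e.symm y := by omega
  have h : y ∈ Prod.snd '' bfChain R e P₀ ω (2 * e.symm y + 2) := by
    simpa [bfChain, bfStep, Nat.add_mod, hk] using
      mem_snd_image_back (R := R) (bfChain R e P₀ ω (2 * e.symm y + 1)) y (ω (2 * e.symm y + 1))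
  obtain ⟨p, hp, rfl⟩ := h
  exact ⟨p.1, hp⟩

end bfChain

section bfPerm

variable (hR : IsRandomGraph R) (e : ℕ ≃ V)
  {P₀ : Set (V × V)} (hP₀ : IsPartialIso R P₀) (hfin : P₀.Finite)

noncomputable def bfPerm (ω : ℕ → ℕ) : Equiv.Perm V :=
  (isPartialIso_iUnion (monotone_bfChain e ω) (isPartialIso_bfChain e hR hP₀ hfin ω)).toPerm
    (fun x => (exists_mem_bfChain_left e ω x).imp fun _ h => Set.mem_iUnion_of_mem _ h)
    (fun y => (exists_mem_bfChain_right e ω y).imp fun _ h => Set.mem_iUnion_of_mem _ h)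

theorem bfPerm_apply_eq_iff {ω : ℕ → ℕ} {x y : V} :
    bfPerm hR e hP₀ hfin ω x = y ↔ ∃ k, (x, y) ∈ bfChain R e P₀ ω k :=
  (IsPartialIso.toPerm_apply_eq_iff _ _ _).trans Set.mem_iUnion

theorem bfPerm_mem_graphAut (ω : ℕ → ℕ) : bfPerm hR e hP₀ hfin ω ∈ graphAut R :=
  IsPartialIso.toPerm_mem_graphAut _ _ _

theorem bfPerm_eq_of_mem_bfChain {ω ω' : ℕ → ℕ} {k : ℕ} {x y : V}
    (h : (x, y) ∈ bfChain R e P₀ ω k) (hω : ∀ i < k, ω' i = ω i) :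
    bfPerm hR e hP₀ hfin ω' x = y :=
  (bfPerm_apply_eq_iff hR e hP₀ hfin).2 ⟨k, bfChain_congr e hω ▸ h⟩

end bfPerm

theorem IsRandomGraph.exists_graphAut_extends [Countable V] [Infinite V]
    (hR : IsRandomGraph R) {P : Set (V × V)} (hP : IsPartialIso R P)
    (hfin : P.Finite) : ∃ f ∈ graphAut R, ∀ p ∈ P, f p.1 = p.2 := by
  obtain ⟨e⟩ : Nonempty (ℕ ≃ V) := nonempty_equiv_of_countable
  exact ⟨_, bfPerm_mem_graphAut hR e hP hfin 0, fun p hp =>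
    (bfPerm_apply_eq_iff hR e hP hfin).2 ⟨0, hp⟩⟩

def agreeInf (R : V → V → Prop) (s : Equiv.Perm V) : Set (graphAut R) :=
  {f | {x | (f : Equiv.Perm V) x = s x}.Infinite}

theorem mul_mul_mem_agreeInf {s : Equiv.Perm V} {b : graphAut R} (hb : b ∈ agreeInf R s)
    (g h : graphAut R) : g * b * h ∈ agreeInf R (g * s * h) := by
  have : {x | ((g * b * h : graphAut R) : Equiv.Perm V) x = (g * s * h : Equiv.Perm V) x} =
      (h : Equiv.Perm V) ⁻¹' {x | (b : Equiv.Perm V) x = s x} := by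
    ext x
    simp [Equiv.Perm.mul_apply]
  change Set.Infinite _
  rw [this]
  exact hb.preimage (by simp)

theorem image_conj_agreeInf_one (g : graphAut R) :
    (fun b => g * b * g⁻¹) '' agreeInf R 1 = agreeInf R 1 := by
  have conj_mem : ∀ (g : graphAut R), ∀ b ∈ agreeInf R 1, g * b * g⁻¹ ∈ agreeInf R 1 :=
    fun g b hb => by simpa using mul_mul_mem_agreeInf hb g g⁻¹
  refine Set.Subset.antisymm ?_ fun f hf => ⟨g⁻¹ * f * g⁻¹⁻¹, conj_mem g⁻¹ f hf, by group⟩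
  rintro _ ⟨b, hb, rfl⟩
  exact conj_mem g b hb

theorem agreeInf_eq_iInter (s : Equiv.Perm V) :
    agreeInf R s = ⋂ S : Finset V, {f : graphAut R | ∃ v ∉ S, (f : Equiv.Perm V) v = s v} := by
  ext f
  simp only [agreeInf, Set.mem_iInter]
  refine ⟨fun h S => ?_, fun h hfin => ?_⟩
  · obtain ⟨v, hv, hvS⟩ := h.exists_notMem_finset S
    exact ⟨v, hvS, hv⟩
  · obtain ⟨v, hvS, hv⟩ := h hfin.toFinset
    exact hvS (hfin.mem_toFinset.2 hv)

theorem IsRandomGraph.exists_graphAut_eqOn_fixing_notMem [Countable V] [Infinite V]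
    (hR : IsRandomGraph R) {f₀ : Equiv.Perm V} (hf₀ : f₀ ∈ graphAut R) {A S : Set V}
    (hA : A.Finite) (hS : S.Finite) :
    ∃ f ∈ graphAut R, Set.EqOn f f₀ A ∧ ∃ z ∉ S, f z = z := by
  set B := A ∪ f₀ '' A ∪ S
  obtain ⟨z, hzB, hz⟩ := (hR.infinite_setOf_adj_iff_mem ((hA.union (hA.image f₀)).union hS)
    (Set.empty_subset B)).nonempty
  -- `z` is a fresh vertex adjacent to nothing in `B`, so it can be added as a fixed point
  have hP : IsPartialIso R (insert (z, z) ((fun x => (x, f₀ x)) '' A)) := by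
    refine (isPartialIso_graphOn hf₀ A).insert hR.symm ?_ Iff.rfl
    rintro _ ⟨x, hx, rfl⟩
    have hxB : x ∈ B := Or.inl (Or.inl hx)
    have hfxB : f₀ x ∈ B := Or.inl (Or.inr ⟨x, hx, rfl⟩)
    exact ⟨iff_of_false (fun h => hzB (h ▸ hxB)) (fun h => hzB (h ▸ hfxB)),
      iff_of_false (fun h => (hz x hxB).1 h) (fun h => (hz _ hfxB).1 h)⟩
  obtain ⟨f, hf, hfP⟩ := hR.exists_graphAut_extends hP ((hA.image _).insert _)
  exact ⟨f, hf, fun x hx => hfP _ (Or.inr ⟨x, hx, rfl⟩),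
    z, fun h => hzB (Or.inr h), hfP _ (Set.mem_insert _ _)⟩

section Topology

variable [TopologicalSpace V]

theorem continuous_perm_apply (v : V) : Continuous fun f : Equiv.Perm V => f v :=
  (continuous_apply v).comp <| continuous_fst.comp
    (continuous_induced_dom : Continuous fun f : Equiv.Perm V => ((⇑f, ⇑f⁻¹) : (V → V) × (V → V)))

theorem eventually_forall_lt_apply_eq {α : Type*} [TopologicalSpace α] [DiscreteTopology α]
    (ω : ℕ → α) (n : ℕ) : ∀ᶠ ω' in 𝓝 ω, ∀ i < n, ω' i = ω i :=
  (Set.finite_lt_nat n).eventually_all.2 fun i _ =>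
    tendsto_pure.1 (by simpa only [nhds_discrete] using (continuous_apply i).tendsto ω)

theorem continuous_bfPerm (hR : IsRandomGraph R) (e : ℕ ≃ V) {P₀ : Set (V × V)}
    (hP₀ : IsPartialIso R P₀) (hfin : P₀.Finite) :
    Continuous (bfPerm hR e hP₀ hfin) := by
  -- the value at `x` and the preimage of `x` are fixed once the chain has reached `x`
  refine continuous_induced_rng.2 <|
    (continuous_pi fun x => ?_).prodMk (continuous_pi fun x => ?_)
  all_goals
    refine IsLocallyConstant.continuous <| (IsLocallyConstant.iff_eventually_eq _).2 fun ω => ?_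
  · obtain ⟨y, hy⟩ := exists_mem_bfChain_left e ω x
    filter_upwards [eventually_forall_lt_apply_eq ω (2 * e.symm x + 1)] with ω' hω'
    rw [bfPerm_eq_of_mem_bfChain hR e hP₀ hfin hy hω',
      bfPerm_eq_of_mem_bfChain hR e hP₀ hfin hy fun _ _ => rfl]
  · obtain ⟨y, hy⟩ := exists_mem_bfChain_right e ω x
    filter_upwards [eventually_forall_lt_apply_eq ω (2 * e.symm x + 2)] with ω' hω'
    rw [Equiv.Perm.inv_eq_iff_eq.2 (bfPerm_eq_of_mem_bfChain hR e hP₀ hfin hy hω').symm,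
      Equiv.Perm.inv_eq_iff_eq.2 (bfPerm_eq_of_mem_bfChain hR e hP₀ hfin hy fun _ _ => rfl).symm]

variable [DiscreteTopology V]

theorem isOpen_setOf_exists_apply_eq (S : Finset V) (s : Equiv.Perm V) :
    IsOpen {f : graphAut R | ∃ v ∉ S, (f : Equiv.Perm V) v = s v} := by
  have : {f : graphAut R | ∃ v ∉ S, (f : Equiv.Perm V) v = s v} =
      ⋃ v ∈ (S : Set V)ᶜ, (fun f : graphAut R => (f : Equiv.Perm V) v) ⁻¹' {s v} := by
    ext f
    simp
  rw [this]
  exact isOpen_biUnion fun v _ =>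
    (isOpen_discrete _).preimage ((continuous_perm_apply v).comp continuous_subtype_val)

theorem measurableSet_agreeInf [Countable V] (s : Equiv.Perm V) :
    MeasurableSet (agreeInf R s) := by
  rw [agreeInf_eq_iInter]
  exact MeasurableSet.iInter fun S => (isOpen_setOf_exists_apply_eq S s).measurableSet

theorem tendsto_nhds_of_eventually_apply_eq {ι : Type*} {l : Filter ι} {f : ι → Equiv.Perm V}
    {g : Equiv.Perm V} (h : ∀ v, (∀ᶠ i in l, f i v = g v) ∧ ∀ᶠ i in l, (f i)⁻¹ v = g⁻¹ v) :
    Tendsto f l (𝓝 g) := by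
  rw [nhds_induced, tendsto_comap_iff, nhds_prod_eq, tendsto_prod_iff']
  simp only [Function.comp_def, tendsto_pi_nhds, nhds_discrete, tendsto_pure]
  exact ⟨fun v => (h v).1, fun v => (h v).2⟩

theorem IsRandomGraph.dense_setOf_exists_fixed [Countable V] [Infinite V]
    (hR : IsRandomGraph R) (S : Finset V) :
    Dense {f : graphAut R | ∃ v ∉ S, (f : Equiv.Perm V) v = v} := by
  intro f₀
  have happrox : ∀ D : Finset V, ∃ f ∈ graphAut R,
      Set.EqOn f f₀ (D ∪ ⇑(f₀ : Equiv.Perm V)⁻¹ '' D) ∧ ∃ z ∉ (S : Set V), f z = z :=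
    fun D => hR.exists_graphAut_eqOn_fixing_notMem f₀.2
      (D.finite_toSet.union (D.finite_toSet.image _)) S.finite_toSet
  choose f hf hfeq hfix using happrox
  have hfinv : ∀ D : Finset V, ∀ v ∈ D, (f D)⁻¹ v = (f₀ : Equiv.Perm V)⁻¹ v := fun D v hv => by
    rw [Equiv.Perm.inv_eq_iff_eq, hfeq D (Or.inr ⟨v, hv, rfl⟩), Equiv.Perm.eq_inv_iff_eq.1 rfl]
  have hev : ∀ v : V, ∀ᶠ D in atTop, v ∈ D := fun v =>
    eventually_atTop.2 ⟨{v}, fun _ => Finset.singleton_subset_iff.1⟩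
  refine mem_closure_of_tendsto (f := fun D => (⟨f D, hf D⟩ : graphAut R)) (b := atTop) ?_
    (Eventually.of_forall fun D => hfix D)
  exact tendsto_subtype_rng.2 (tendsto_nhds_of_eventually_apply_eq fun v =>
    ⟨(hev v).mono fun D hD => hfeq D (Or.inl hD), (hev v).mono fun D hD => hfinv D v hD⟩)

theorem IsRandomGraph.agreeInf_one_mem_residual [Countable V] [Infinite V]
    (hR : IsRandomGraph R) : agreeInf R 1 ∈ residual (graphAut R) := by
  rw [agreeInf_eq_iInter]
  refine countable_iInter_mem.2 fun S => residual_of_dense_open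
    (isOpen_setOf_exists_apply_eq S 1) ?_
  simpa only [Equiv.Perm.one_apply] using hR.dense_setOf_exists_fixed S

end Topology

theorem infinitePi_setOf_apply_mem_le {α : Type*} [MeasurableSpace α]
    [MeasurableSingletonClass α] [Countable α] (μ : ℕ → Measure α)
    [∀ k, IsProbabilityMeasure (μ k)] {k : ℕ} {ε : ℝ≥0∞} (hμ : ∀ c, μ k {c} ≤ ε)
    {T : (ℕ → α) → Set α} (hT : ∀ ω, (T ω).Subsingleton)
    (hTk : ∀ ω ω', (∀ i < k, ω i = ω' i) → T ω = T ω') :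
    Measure.infinitePi μ {ω | ω k ∈ T ω} ≤ ε := by
  set ν := Measure.infinitePi μ
  set X : (ℕ → α) → (Fin k → α) := fun ω i => ω i
  have hX : Measurable X := measurable_pi_lambda _ fun i => measurable_pi_apply _
  have hind : IndepFun X (fun ω => ω k) ν := by
    have := (iIndepFun_infinitePi (P := μ) (X := fun _ => id) fun _ => measurable_id
      ).indepFun_finset (Finset.range k) {k} (by simp) fun i => measurable_pi_apply i
    have hφ : Measurable fun (x : Finset.range k → α) (i : Fin k) =>
        x ⟨i, Finset.mem_range.2 i.2⟩ := by fun_prop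
    have hψ : Measurable fun (y : ({k} : Finset ℕ) → α) => y ⟨k, Finset.mem_singleton_self k⟩ := by
      fun_prop
    exact this.comp hφ hψ
  set D : Set ((Fin k → α) × α) := {q | ∃ ω, X ω = q.1 ∧ q.2 ∈ T ω}
  have hD : {ω | ω k ∈ T ω} = (fun ω => (X ω, ω k)) ⁻¹' D := by
    ext ω
    refine ⟨fun h => ⟨ω, rfl, h⟩, fun ⟨ω', hω', h⟩ => ?_⟩
    change ω k ∈ T ω
    rwa [hTk ω ω' fun i hi => (congrFun hω' ⟨i, hi⟩).symm]
  have hsec : ∀ x, (Prod.mk x ⁻¹' D).Subsingleton := by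
    rintro x y ⟨ω, rfl, hy⟩ y' ⟨ω', hω', hy'⟩
    rw [hTk ω' ω fun i hi => congrFun hω' ⟨i, hi⟩] at hy'
    exact hT ω hy hy'
  have hatom : ∀ x, μ k (Prod.mk x ⁻¹' D) ≤ ε := fun x => by
    rcases (hsec x).eq_empty_or_singleton with h | ⟨c, h⟩
    · simp [h]
    · exact h ▸ hμ c
  have : IsProbabilityMeasure (ν.map X) := Measure.isProbabilityMeasure_map hX.aemeasurable
  calc ν {ω | ω k ∈ T ω} = ((ν.map X).prod (μ k)) D := by
        rw [hD, ← Measure.map_apply (hX.prodMk (measurable_pi_apply k))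
          MeasurableSet.of_discrete, hind.map_prod_eq_prod_map_map hX.aemeasurable
          (measurable_pi_apply k).aemeasurable, Measure.infinitePi_map_eval]
    _ = ∫⁻ x, μ k (Prod.mk x ⁻¹' D) ∂(ν.map X) := Measure.prod_apply MeasurableSet.of_discrete
    _ ≤ ∫⁻ _, ε ∂(ν.map X) := lintegral_mono hatom
    _ = ε := by simp

noncomputable def choiceMeasure : Measure (ℕ → ℕ) :=
  Measure.infinitePi fun k => (PMF.uniformOfFinset (Finset.range (2 ^ k))
    (Finset.nonempty_range_iff.2 (pow_ne_zero k two_ne_zero))).toMeasure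

instance : IsProbabilityMeasure choiceMeasure := by
  unfold choiceMeasure
  infer_instance

theorem choiceMeasure_setOf_bfChain_new_le (hR : IsRandomGraph R) (e : ℕ ≃ V)
    (s : Equiv.Perm V) (k : ℕ) :
    choiceMeasure {ω | ∃ p ∈ bfChain R e ∅ ω (k + 1), p ∉ bfChain R e ∅ ω k ∧ p.2 = s p.1} ≤
      2⁻¹ ^ k := by
  have hatom : ∀ c, (PMF.uniformOfFinset (Finset.range (2 ^ k))
      (Finset.nonempty_range_iff.2 (pow_ne_zero k two_ne_zero))).toMeasure {c} ≤ 2⁻¹ ^ k := by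
    intro c
    rw [PMF.toMeasure_apply_singleton _ _ (measurableSet_singleton c), PMF.uniformOfFinset_apply,
      Finset.card_range, Nat.cast_pow, Nat.cast_ofNat, ENNReal.inv_pow]
    split_ifs
    exacts [le_rfl, zero_le]
  have hT : ∀ ω, {n | ∃ p ∈ bfStep R e k n (bfChain R e ∅ ω k),
      p ∉ bfChain R e ∅ ω k ∧ p.2 = s p.1}.Subsingleton := by
    intro ω
    have hP := isPartialIso_bfChain e hR isPartialIso_empty Set.finite_empty ω k
    have hfin := finite_bfChain (R := R) e Set.finite_empty ω k
    unfold bfStep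
    split_ifs
    exacts [subsingleton_setOf_forth_new hR hP hfin _ s, subsingleton_setOf_back_new hR hP hfin _ s]
  exact infinitePi_setOf_apply_mem_le _ hatom hT fun ω ω' h => by rw [bfChain_congr e h]

/-- By Borel–Cantelli, almost surely only finitely many stages add a pair on the graph of `s`, and
every point where the limit agrees with `s` enters the chain at such a stage. -/
theorem choiceMeasure_setOf_infinite_agree_eq_zero (hR : IsRandomGraph R) (e : ℕ ≃ V)
    (s : Equiv.Perm V) :
    choiceMeasure {ω | {x | bfPerm hR e isPartialIso_empty Set.finite_empty ω x = s x}.Infinite}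
      = 0 := by
  refine measure_mono_null (fun ω (hω : Set.Infinite _) => ?_)
    (measure_setOfPred_frequently_eq_zero (ne_top_of_le_ne_top (by simp)
      (ENNReal.tsum_le_tsum (choiceMeasure_setOf_bfChain_new_le hR e s))))
  have hcover : {x | bfPerm hR e isPartialIso_empty Set.finite_empty ω x = s x} ⊆
      ⋃ k ∈ {k | ∃ p ∈ bfChain R e ∅ ω (k + 1), p ∉ bfChain R e ∅ ω k ∧ p.2 = s p.1},
        Prod.fst '' bfChain R e ∅ ω (k + 1) := by
    intro x hx
    obtain ⟨k, hk, hk1⟩ := Nat.exists_not_and_succ_of_not_zero_of_exists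
      (p := fun k => (x, s x) ∈ bfChain R e ∅ ω k) (Set.notMem_empty _)
      ((bfPerm_apply_eq_iff hR e _ _).1 hx)
    exact Set.mem_biUnion ⟨_, hk1, hk, rfl⟩ ⟨_, hk1, rfl⟩
  exact Nat.frequently_atTop_iff_infinite.2 fun hfin => hω <| (hfin.biUnion fun k _ =>
    (finite_bfChain e Set.finite_empty ω (k + 1)).image Prod.fst).subset hcover

theorem IsRandomGraph.haarNull_agreeInf_one [TopologicalSpace V] [DiscreteTopology V]
    [Countable V] [Infinite V] (hR : IsRandomGraph R) : HaarNull (agreeInf R 1) := by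
  obtain ⟨e⟩ : Nonempty (ℕ ≃ V) := nonempty_equiv_of_countable
  set randomAut : (ℕ → ℕ) → graphAut R := fun ω =>
    ⟨_, bfPerm_mem_graphAut hR e isPartialIso_empty Set.finite_empty ω⟩
  have hmeas : Measurable randomAut := ((continuous_bfPerm hR e _ _).subtype_mk _).measurable
  refine ⟨agreeInf R 1, subset_rfl, measurableSet_agreeInf 1, choiceMeasure.map randomAut,
    Measure.isProbabilityMeasure_map hmeas.aemeasurable, fun g h => ?_⟩
  have hsub : (fun b => g * b * h) '' agreeInf R 1 ⊆ agreeInf R (g * 1 * h) := by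
    rintro _ ⟨b, hb, rfl⟩
    exact mul_mul_mem_agreeInf hb g h
  refine measure_mono_null hsub ?_
  rw [Measure.map_apply hmeas (measurableSet_agreeInf _)]
  exact choiceMeasure_setOf_infinite_agree_eq_zero hR e _

end RandomGraph

/-- The automorphism group of the random graph can be decomposed into the union of a
conjugacy-invariant Haar null set and a meager set. -/
theorem stmt_15 {V : Type*} [Countable V] [Infinite V]
    [TopologicalSpace V] [DiscreteTopology V] (R : V → V → Prop)
    (hsym : ∀ x y, R x y → R y x) (hirr : ∀ x, ¬ R x x)
    (hrand : ∀ A B : Set V, A.Finite → B.Finite → Disjoint A B →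
      ∃ v : V, (∀ x ∈ A, R v x) ∧ (∀ y ∈ B, ¬ R v y)) :
    ∃ H M : Set (graphAut R), H ∪ M = Set.univ ∧ HaarNull H ∧
      (∀ g : graphAut R, (fun x => g * x * g⁻¹) '' H = H) ∧ IsMeagre M := by
  have hR : RandomGraph.IsRandomGraph R := ⟨hsym, hirr, hrand⟩
  refine ⟨RandomGraph.agreeInf R 1, (RandomGraph.agreeInf R 1)ᶜ, Set.union_compl_self _,
    hR.haarNull_agreeInf_one, RandomGraph.image_conj_agreeInf_one, ?_⟩
  rw [IsMeagre, compl_compl]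
  exact hR.agreeInf_one_mem_residual
end

section
/- Let G₁ and G₂ be Polish groups, let A₁ ⊆ G₁ be a Borel set, and let U ⊆ G₂ be a nonempty open set. Then A₁ × U is Haar null in the product group G₁ × G₂ if and only if A₁ is Haar null in G₁. -/
/-! If a Borel `B ⊇ A` and `μ` witness that `A` is Haar null, then `B ×ˢ univ` and `μ ⊗ δ₁`
witness it for `A ×ˢ U`, since two-sided translates of `B ×ˢ univ` are products. Conversely, if
`μ` witnesses that `A ×ˢ U` is Haar null, then its marginal witnesses that `A` is: countably many
left translates of `U` by a dense set cover `G₂`, so each `gAh ×ˢ univ` lies in countably many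
translates of `A ×ˢ U`. -/

open MeasureTheory

open Set
open scoped Pointwise

theorem MeasurableSet.image_mul_mul {G : Type*} [Group G] [TopologicalSpace G]
    [IsTopologicalGroup G] [MeasurableSpace G] [BorelSpace G] (g h : G) {B : Set G}
    (hB : MeasurableSet B) : MeasurableSet ((fun b => g * b * h) '' B) :=
  ((Homeomorph.mulLeft g).trans (Homeomorph.mulRight h)).toMeasurableEquiv.measurableSet_image.2 hB

theorem Dense.mul_isOpen_eq_univ {G : Type*} [Group G] [TopologicalSpace G]
    [IsTopologicalGroup G] {D U : Set G} (hD : Dense D) (hU : IsOpen U) (hne : U.Nonempty) :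
    D * U = univ := by
  rw [← hU.closure_mul, hD.closure_eq, univ_mul hne]

theorem image_mul_mul_prod {G₁ G₂ : Type*} [Group G₁] [Group G₂] (g h : G₁ × G₂)
    (s : Set G₁) (t : Set G₂) :
    (fun b => g * b * h) '' s ×ˢ t =
      ((fun b => g.1 * b * h.1) '' s) ×ˢ ((fun b => g.2 * b * h.2) '' t) :=
  prodMap_image_prod (fun b => g.1 * b * h.1) (fun b => g.2 * b * h.2) s t

theorem image_mul_mul_prod_univ_subset {G₁ G₂ : Type*} [Group G₁] [Group G₂] {D U : Set G₂}
    (hDU : D * U = univ) (g h : G₁) (A : Set G₁) :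
    ((fun b => g * b * h) '' A) ×ˢ (univ : Set G₂) ⊆
      ⋃ d ∈ D, (fun p => (g, d) * p * (h, 1)) '' A ×ˢ U := by
  rintro ⟨-, y⟩ ⟨⟨a, ha, rfl⟩, -⟩
  obtain ⟨d, hd, u, hu, rfl⟩ : y ∈ D * U := hDU ▸ mem_univ y
  exact mem_iUnion₂.2 ⟨d, hd, (a, u), ⟨ha, hu⟩, by simp⟩

theorem HaarNull.prod {G₁ G₂ : Type*} [Group G₁] [MeasurableSpace G₁] [Group G₂]
    [MeasurableSpace G₂] {A : Set G₁} (hA : HaarNull A) (V : Set G₂) : HaarNull (A ×ˢ V) := by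
  obtain ⟨B, hAB, hB, μ, hμ, hnull⟩ := hA
  refine ⟨B ×ˢ univ, prod_mono hAB (subset_univ V), hB.prod .univ, μ.prod (Measure.dirac 1),
    inferInstance, fun g h => ?_⟩
  rw [image_mul_mul_prod, Measure.prod_prod, hnull, zero_mul]

theorem HaarNull.of_prod {G₁ G₂ : Type*} [Group G₁] [TopologicalSpace G₁]
    [IsTopologicalGroup G₁] [MeasurableSpace G₁] [BorelSpace G₁] [Group G₂] [TopologicalSpace G₂]
    [IsTopologicalGroup G₂] [TopologicalSpace.SeparableSpace G₂] [MeasurableSpace G₂]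
    {A : Set G₁} (hA : MeasurableSet A) {U : Set G₂} (hU : IsOpen U) (hne : U.Nonempty)
    (hAU : HaarNull (A ×ˢ U)) : HaarNull A := by
  obtain ⟨B, hAUB, -, μ, hμ, hnull⟩ := hAU
  obtain ⟨D, hDc, hD⟩ := TopologicalSpace.exists_countable_dense G₂
  refine ⟨A, subset_rfl, hA, μ.map Prod.fst,
    Measure.isProbabilityMeasure_map measurable_fst.aemeasurable, fun g h => ?_⟩
  rw [Measure.map_apply measurable_fst (hA.image_mul_mul g h), ← prod_univ]
  refine measure_mono_null (image_mul_mul_prod_univ_subset (hD.mul_isOpen_eq_univ hU hne) g h A) ?_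
  exact (measure_biUnion_null_iff hDc).2 fun d _ =>
    measure_mono_null (image_mono hAUB) (hnull (g, d) (h, 1))

theorem stmt_19_general {G₁ G₂ : Type*}
    [Group G₁] [TopologicalSpace G₁] [IsTopologicalGroup G₁]
    [MeasurableSpace G₁] [BorelSpace G₁]
    [Group G₂] [TopologicalSpace G₂] [IsTopologicalGroup G₂] [PolishSpace G₂]
    [MeasurableSpace G₂]
    (A₁ : Set G₁) (hA₁ : MeasurableSet A₁) (U : Set G₂) (hU : IsOpen U)
    (hUne : U.Nonempty) :
    HaarNull (A₁ ×ˢ U) ↔ HaarNull A₁ :=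
  ⟨HaarNull.of_prod hA₁ hU hUne, (HaarNull.prod · U)⟩

/-- If `G₁, G₂` are Polish groups, `A₁ ⊆ G₁` is Borel and `U ⊆ G₂` is nonempty open, then
`A₁ × U` is Haar null in `G₁ × G₂` iff `A₁` is Haar null in `G₁`. -/
theorem stmt_19 {G₁ G₂ : Type*}
    [Group G₁] [TopologicalSpace G₁] [IsTopologicalGroup G₁] [PolishSpace G₁]
    [MeasurableSpace G₁] [BorelSpace G₁]
    [Group G₂] [TopologicalSpace G₂] [IsTopologicalGroup G₂] [PolishSpace G₂]
    [MeasurableSpace G₂] [BorelSpace G₂]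
    (A₁ : Set G₁) (hA₁ : MeasurableSet A₁) (U : Set G₂) (hU : IsOpen U)
    (hUne : U.Nonempty) :
    HaarNull (A₁ ×ˢ U) ↔ HaarNull A₁ :=
  stmt_19_general A₁ hA₁ U hU hUne
end
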